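/- arXiv:2009.02726 — 7 statements merged into one kernel-verified Lean document; each statement's English description precedes it below -/
import Mathlib

section
/- Let p ≥ 2, κ ∈ [0,1] and γ ∈ [1/(p−1), 1], and let E(ξ) = (|ξ| + κ)^{γp − γ − 1} ξ. Then there is a constant C = C(p, γ) > 0 such that for all ξ, ζ ∈ ℝⁿ, |E(ξ) − E(ζ)|^{(1/γ) − 1} ≤ C (|ξ| + |ζ| + κ)^{(p−1)(1−γ)}. -/
lemma norm_rpow_add_smul_le {F : Type*} [SeminormedAddCommGroup F] [NormedSpace ℝ F]
    {κ : ℝ} (hκ : 0 ≤ κ) (s : ℝ) (x : F) :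
    ‖(‖x‖ + κ) ^ s • x‖ ≤ (‖x‖ + κ) ^ (s + 1) := by
  have hb : 0 ≤ ‖x‖ + κ := by positivity
  rw [norm_smul, Real.norm_of_nonneg (Real.rpow_nonneg hb s)]
  rcases hb.eq_or_lt with hzero | hpos
  · have hx : ‖x‖ = 0 := by linarith [norm_nonneg x]
    rw [hx, mul_zero]
    exact Real.rpow_nonneg (by positivity) _
  · rw [Real.rpow_add_one hpos.ne']
    exact mul_le_mul_of_nonneg_left (by linarith) (Real.rpow_nonneg hb s)

lemma norm_sub_le_two_mul_rpow {F G : Type*} [SeminormedAddCommGroup F]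
    [SeminormedAddCommGroup G] (f : F → G) {κ a : ℝ} (hκ : 0 ≤ κ) (ha : 0 ≤ a)
    (hf : ∀ x, ‖f x‖ ≤ (‖x‖ + κ) ^ a) (x y : F) :
    ‖f x - f y‖ ≤ 2 * (‖x‖ + ‖y‖ + κ) ^ a := by
  have hmono : ∀ {u v : ℝ}, 0 ≤ u → u ≤ v → u ^ a ≤ v ^ a :=
    fun hu huv => Real.rpow_le_rpow hu huv ha
  calc ‖f x - f y‖ ≤ ‖f x‖ + ‖f y‖ := norm_sub_le _ _
    _ ≤ (‖x‖ + κ) ^ a + (‖y‖ + κ) ^ a := add_le_add (hf x) (hf y)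
    _ ≤ (‖x‖ + ‖y‖ + κ) ^ a + (‖x‖ + ‖y‖ + κ) ^ a :=
        add_le_add (hmono (by positivity) (by linarith [norm_nonneg y]))
          (hmono (by positivity) (by linarith [norm_nonneg x]))
    _ = 2 * (‖x‖ + ‖y‖ + κ) ^ a := by ring

/-- For `p ≥ 2`, `κ ∈ [0,1]`, `γ ∈ [1/(p-1), 1]` and
`E(ξ) = (|ξ| + κ)^(γp - γ - 1) ξ`, there is `C = C(p,γ) > 0` such that
`|E(ξ) - E(ζ)|^((1/γ) - 1) ≤ C (|ξ| + |ζ| + κ)^((p-1)(1-γ))` for all `ξ, ζ ∈ ℝⁿ`. -/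
theorem statement1 (p κ γ : ℝ) (hp : 2 ≤ p) (hκ : κ ∈ Set.Icc (0:ℝ) 1)
    (hγ : γ ∈ Set.Icc (1/(p-1)) 1)
    (E : ∀ n : ℕ, EuclideanSpace ℝ (Fin n) → EuclideanSpace ℝ (Fin n))
    (hE : ∀ (n : ℕ) (ξ : EuclideanSpace ℝ (Fin n)),
      E n ξ = ((‖ξ‖ + κ) ^ (γ * p - γ - 1)) • ξ) :
    ∃ C : ℝ, 0 < C ∧ ∀ (n : ℕ) (ξ ζ : EuclideanSpace ℝ (Fin n)),
      ‖E n ξ - E n ζ‖ ^ (1/γ - 1) ≤ C * (‖ξ‖ + ‖ζ‖ + κ) ^ ((p - 1) * (1 - γ)) := by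
  obtain ⟨hγl, hγu⟩ := hγ
  have hγ0 : 0 < γ := lt_of_lt_of_le (one_div_pos.mpr (by linarith)) hγl
  have he : 0 ≤ 1/γ - 1 := by rw [sub_nonneg, le_div_iff₀ hγ0]; linarith
  have ha : 0 ≤ γ * p - γ - 1 + 1 := by nlinarith
  have hexp : (γ * p - γ - 1 + 1) * (1/γ - 1) = (p - 1) * (1 - γ) := by field_simp; ring
  refine ⟨2 ^ (1/γ - 1), by positivity, fun n ξ ζ => ?_⟩
  have hS : 0 ≤ ‖ξ‖ + ‖ζ‖ + κ := by linarith [norm_nonneg ξ, norm_nonneg ζ, hκ.1]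
  have hdiff := norm_sub_le_two_mul_rpow (E n) hκ.1 ha
    (fun x => hE n x ▸ norm_rpow_add_smul_le hκ.1 _ x) ξ ζ
  calc ‖E n ξ - E n ζ‖ ^ (1/γ - 1)
      ≤ (2 * (‖ξ‖ + ‖ζ‖ + κ) ^ (γ * p - γ - 1 + 1)) ^ (1/γ - 1) :=
        Real.rpow_le_rpow (norm_nonneg _) hdiff he
    _ = 2 ^ (1/γ - 1) * (‖ξ‖ + ‖ζ‖ + κ) ^ ((p - 1) * (1 - γ)) := by
        rw [Real.mul_rpow zero_le_two (Real.rpow_nonneg hS _), ← Real.rpow_mul hS, hexp]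
end

section
/- Let p ≥ 2, κ ∈ [0,1] and γ ∈ [1/(p−1), 1], and let E(ξ) = (|ξ| + κ)^{γp − γ − 1} ξ. Then there is a constant C = C(p, γ) > 0 such that for all ξ, ζ ∈ ℝⁿ, |E(ξ) − E(ζ)| ≤ C (|ξ| + |ζ| + κ)^{γp − γ − 1} |ξ − ζ|. -/
/-!
With `α = γp - γ - 1 ≥ 0`, `a = ‖ξ‖ + κ ≥ b = ‖ζ‖ + κ`, write
`E ξ - E ζ = a^α (ξ - ζ) + (a^α - b^α) ζ`. The first term is at most `(‖ξ‖ + ‖ζ‖ + κ)^α ‖ξ - ζ‖`;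
for the second, `(a^α - b^α) b ≤ α a^α (a - b)`, which is the tangent-line inequality
`(α + 1) a^α b ≤ α a^(α+1) + b^(α+1)` for the convex function `t ↦ t^(α+1)`, i.e. weighted AM-GM.
Hence `C = α + 1` works.
-/

lemma rpow_sub_rpow_mul_le {α x y : ℝ} (hα : 0 ≤ α) (hx : 0 ≤ x) (hy : 0 ≤ y) :
    (x ^ α - y ^ α) * y ≤ α * x ^ α * (x - y) := by
  have hα1 : 0 < α + 1 := by linarith
  have amgm := Real.geom_mean_le_arith_mean2_weighted (w₁ := α / (α + 1)) (w₂ := 1 / (α + 1))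
    (by positivity) (by positivity) (Real.rpow_nonneg hx (α + 1)) (Real.rpow_nonneg hy (α + 1))
    (by field_simp)
  rw [← Real.rpow_mul hx, ← Real.rpow_mul hy, mul_div_cancel₀ α hα1.ne',
    mul_one_div_cancel hα1.ne', Real.rpow_one, Real.rpow_add_one' hx (by linarith),
    Real.rpow_add_one' hy (by linarith)] at amgm
  have : (α + 1) * (x ^ α * y) ≤ α * (x ^ α * x) + y ^ α * y := by
    have := mul_le_mul_of_nonneg_left amgm hα1.le
    field_simp at this
    linarith
  linarith

lemma norm_rpow_smul_sub_rpow_smul_le {F : Type*} [NormedAddCommGroup F] [NormedSpace ℝ F]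
    {α κ : ℝ} (hα : 0 ≤ α) (hκ : 0 ≤ κ) (ξ ζ : F) :
    ‖(‖ξ‖ + κ) ^ α • ξ - (‖ζ‖ + κ) ^ α • ζ‖ ≤ (α + 1) * (‖ξ‖ + ‖ζ‖ + κ) ^ α * ‖ξ - ζ‖ := by
  wlog hζξ : ‖ζ‖ ≤ ‖ξ‖ generalizing ξ ζ
  · simpa only [norm_sub_rev, add_comm ‖ζ‖] using this ζ ξ (le_of_not_ge hζξ)
  set a := ‖ξ‖ + κ
  set b := ‖ζ‖ + κ
  set M := ‖ξ‖ + ‖ζ‖ + κ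
  have hb : 0 ≤ b := by positivity
  have hba : b ≤ a := by linarith
  have hAM : a ^ α ≤ M ^ α := Real.rpow_le_rpow (by positivity) (by linarith [norm_nonneg ζ]) hα
  have hD : 0 ≤ a ^ α - b ^ α := sub_nonneg.mpr (Real.rpow_le_rpow hb hba hα)
  have hab : a - b ≤ ‖ξ - ζ‖ := by linarith [norm_sub_norm_le ξ ζ]
  have radial : (a ^ α - b ^ α) * ‖ζ‖ ≤ α * M ^ α * ‖ξ - ζ‖ :=
    calc (a ^ α - b ^ α) * ‖ζ‖ ≤ (a ^ α - b ^ α) * b := by gcongr; linarith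
      _ ≤ α * a ^ α * (a - b) := rpow_sub_rpow_mul_le hα (hb.trans hba) hb
      _ ≤ α * M ^ α * ‖ξ - ζ‖ := by gcongr
  calc ‖a ^ α • ξ - b ^ α • ζ‖ = ‖a ^ α • (ξ - ζ) + (a ^ α - b ^ α) • ζ‖ := by
        rw [smul_sub, sub_smul, sub_add_sub_cancel]
    _ ≤ a ^ α * ‖ξ - ζ‖ + (a ^ α - b ^ α) * ‖ζ‖ := by
        refine (norm_add_le _ _).trans_eq ?_
        rw [norm_smul, norm_smul, Real.norm_of_nonneg (by positivity), Real.norm_of_nonneg hD]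
    _ ≤ M ^ α * ‖ξ - ζ‖ + α * M ^ α * ‖ξ - ζ‖ := by gcongr
    _ = (α + 1) * M ^ α * ‖ξ - ζ‖ := by ring

/-- For `p ≥ 2`, `κ ∈ [0,1]`, `γ ∈ [1/(p-1), 1]` and
`E(ξ) = (|ξ| + κ)^(γp - γ - 1) ξ`, there is `C = C(p,γ) > 0` such that
`|E(ξ) - E(ζ)| ≤ C (|ξ| + |ζ| + κ)^(γp - γ - 1) |ξ - ζ|` for all `ξ, ζ ∈ ℝⁿ`. -/
theorem statement2 (p κ γ : ℝ) (hp : 2 ≤ p) (hκ : κ ∈ Set.Icc (0:ℝ) 1)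
    (hγ : γ ∈ Set.Icc (1/(p-1)) 1)
    (E : ∀ n : ℕ, EuclideanSpace ℝ (Fin n) → EuclideanSpace ℝ (Fin n))
    (hE : ∀ (n : ℕ) (ξ : EuclideanSpace ℝ (Fin n)),
      E n ξ = ((‖ξ‖ + κ) ^ (γ * p - γ - 1)) • ξ) :
    ∃ C : ℝ, 0 < C ∧ ∀ (n : ℕ) (ξ ζ : EuclideanSpace ℝ (Fin n)),
      ‖E n ξ - E n ζ‖ ≤ C * (‖ξ‖ + ‖ζ‖ + κ) ^ (γ * p - γ - 1) * ‖ξ - ζ‖ := by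
  have hα : 0 ≤ γ * p - γ - 1 := by
    have := (div_le_iff₀ (by linarith : (0 : ℝ) < p - 1)).mp hγ.1
    linarith
  refine ⟨γ * p - γ - 1 + 1, by linarith, fun n ξ ζ => ?_⟩
  rw [hE, hE]
  exact norm_rpow_smul_sub_rpow_smul_le hα hκ.1 ξ ζ
end

section
/- Let n ≥ 2, let Ω ⊂ ℝⁿ be an open bounded set, σ ∈ (0,1), α, β ≥ 0, p ≥ 2, κ ∈ [0,1], c ≥ 1, γ ∈ [1/(p−1), 1], let E(ξ) = (|ξ| + κ)^{γp − γ − 1} ξ, and let A : ℝⁿ → ℝⁿ be continuously differentiable with ⟨∂_z A(z) ζ, ζ⟩ ≥ c^{−1} (|z|² + κ²)^{(p−2)/2} |ζ|². Then there is C = C(p, γ, c) > 0 such that for every measurable v : Ω → ℝⁿ, ∫_Ω ∫_Ω d^α(x) d^β(y) |E(v(x)) − E(v(y))|^{1/γ} / |x−y|^{n+σ} dx dy ≤ C ∫_Ω ∫_Ω d^α(x) d^β(y) |A(v(x)) − A(v(y))| / |x−y|^{n+σ} dx dy; equivalently, [E∘v]_{W_G^{γσ, 1/γ}(Ω;α,β)}^{1/γ}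 ≤ C [A∘v]_{W_G^{σ,1}(Ω;α,β)}. -/
/-!
The inequality holds pointwise: `‖E a - E b‖ ^ (1/γ) ≤ C ‖A a - A b‖` for all `a, b`, and is then
integrated against the nonnegative kernel. For `‖b‖ ≤ ‖a‖` and `δ = γ(p-1) - 1 ≥ 0`, writing
`E a - E b = (‖a‖+κ)^δ (a - b) + ((‖a‖+κ)^δ - (‖b‖+κ)^δ) b` gives
`‖E a - E b‖ ≤ (1+δ) (‖a‖+κ)^δ ‖a - b‖`. Conversely, integrating the ellipticity of `A` along the
segment from `b` to `a`, whose last quarter stays at distance `≥ ‖a‖/2` from the origin, gives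
`⟪A a - A b, a - b⟫ ≳ (‖a‖+κ)^(p-2) ‖a - b‖²`. Since `‖a - b‖ ≤ 2(‖a‖+κ)` and `1/γ ≥ 1`, raising
the first bound to the power `1/γ` gives a multiple of `(‖a‖+κ)^(δ/γ + 1/γ - 1) ‖a - b‖`, and
`δ/γ + 1/γ - 1 = p - 2`.
-/

open MeasureTheory Set
open scoped ENNReal RealInnerProductSpace

lemma rpow_sub_rpow_mul_le_s6 {u v δ : ℝ} (hu : 0 ≤ u) (hv : 0 ≤ v) (hδ : 0 ≤ δ) :
    (u ^ δ - v ^ δ) * v ≤ δ * u ^ δ * (u - v) := by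
  have hδ1 : (0 : ℝ) < 1 + δ := by linarith
  -- weighted AM-GM with weights `1/(1+δ)`, `δ/(1+δ)` applied to `v^(1+δ)` and `u^(1+δ)`
  have amgm := Real.geom_mean_le_arith_mean2_weighted (inv_pos.2 hδ1).le
    (div_nonneg hδ hδ1.le) (Real.rpow_nonneg hv (1 + δ)) (Real.rpow_nonneg hu (1 + δ))
    (by field_simp)
  rw [← Real.rpow_mul hv, ← Real.rpow_mul hu, mul_inv_cancel₀ hδ1.ne', Real.rpow_one,
    mul_div_cancel₀ δ hδ1.ne', Real.rpow_one_add' hv hδ1.ne',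
    Real.rpow_one_add' hu hδ1.ne'] at amgm
  have key : (1 + δ) * (v * u ^ δ) ≤ v * v ^ δ + δ * (u * u ^ δ) := by
    have := mul_le_mul_of_nonneg_left amgm hδ1.le
    field_simp at this
    linarith
  linarith

lemma norm_rpow_smul_sub_rpow_smul_le_s6 {V : Type*} [NormedAddCommGroup V] [NormedSpace ℝ V]
    {κ δ : ℝ} (hκ : 0 ≤ κ) (hδ : 0 ≤ δ) {a b : V} (hba : ‖b‖ ≤ ‖a‖) :
    ‖(‖a‖ + κ) ^ δ • a - (‖b‖ + κ) ^ δ • b‖ ≤ (1 + δ) * (‖a‖ + κ) ^ δ * ‖a - b‖ := by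
  set u := ‖a‖ + κ
  set v := ‖b‖ + κ
  have hu : 0 ≤ u := by positivity
  have hv : 0 ≤ v := by positivity
  have hvu : v ^ δ ≤ u ^ δ := Real.rpow_le_rpow hv (by simp only [u, v]; linarith) hδ
  have huv : u - v ≤ ‖a - b‖ := by
    simpa only [u, v, add_sub_add_right_eq_sub] using norm_sub_norm_le a b
  calc ‖u ^ δ • a - v ^ δ • b‖ = ‖u ^ δ • (a - b) + (u ^ δ - v ^ δ) • b‖ := by
        congr 1; module
    _ ≤ u ^ δ * ‖a - b‖ + (u ^ δ - v ^ δ) * ‖b‖ := by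
        refine (norm_add_le _ _).trans_eq ?_
        rw [norm_smul, norm_smul, Real.norm_of_nonneg (Real.rpow_nonneg hu δ),
          Real.norm_of_nonneg (sub_nonneg.2 hvu)]
    _ ≤ u ^ δ * ‖a - b‖ + (u ^ δ - v ^ δ) * v := by
        gcongr
        simp only [v]; linarith
    _ ≤ u ^ δ * ‖a - b‖ + δ * u ^ δ * ‖a - b‖ := by
        have : δ * u ^ δ * (u - v) ≤ δ * u ^ δ * ‖a - b‖ := by gcongr
        linarith [rpow_sub_rpow_mul_le_s6 hu hv hδ]
    _ = (1 + δ) * u ^ δ * ‖a - b‖ := by ring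

lemma mul_sub_le_sub_of_le_deriv {f : ℝ → ℝ} {a m b L : ℝ} (hf : Differentiable ℝ f)
    (ham : a ≤ m) (hmb : m ≤ b) (h0 : ∀ t ∈ Ioo a m, 0 ≤ deriv f t)
    (hL : ∀ t ∈ Ioo m b, L ≤ deriv f t) :
    L * (b - m) ≤ f b - f a := by
  have h₁ := (convex_Icc a m).mul_sub_le_image_sub_of_le_deriv hf.continuous.continuousOn
    hf.differentiableOn (by rwa [interior_Icc]) a (left_mem_Icc.2 ham) m (right_mem_Icc.2 ham)
    ham
  have h₂ := (convex_Icc m b).mul_sub_le_image_sub_of_le_deriv hf.continuous.continuousOn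
    hf.differentiableOn (by rwa [interior_Icc]) m (left_mem_Icc.2 hmb) b (right_mem_Icc.2 hmb)
    hmb
  linarith

lemma half_norm_le_norm_add_smul_sub {V : Type*} [NormedAddCommGroup V] [NormedSpace ℝ V]
    {a b : V} (hba : ‖b‖ ≤ ‖a‖) {t : ℝ} (ht : t ∈ Icc (3 / 4 : ℝ) 1) :
    ‖a‖ / 2 ≤ ‖b + t • (a - b)‖ := by
  have h : t • a = (b + t • (a - b)) + (t - 1) • b := by module
  have := norm_add_le (b + t • (a - b)) ((t - 1) • b)
  rw [← h, norm_smul, norm_smul, Real.norm_of_nonneg (by linarith [ht.1]),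
    Real.norm_of_nonpos (by linarith [ht.2])] at this
  nlinarith [ht.1, ht.2, norm_nonneg b]

lemma rpow_two_mul_le_eight_rpow_mul {s x κ q : ℝ} (hs : 0 ≤ s) (hx : s / 2 ≤ x) (hκ : 0 ≤ κ)
    (hq : 0 ≤ q) : (s + κ) ^ (2 * q) ≤ 8 ^ q * (x ^ 2 + κ ^ 2) ^ q := by
  rw [← Real.mul_rpow (by norm_num) (by positivity), Real.rpow_mul (by positivity)]
  norm_cast
  gcongr
  nlinarith [sq_nonneg (s - κ)]

section Elliptic

variable {F : Type*} [NormedAddCommGroup F] [InnerProductSpace ℝ F] {A : F → F} {κ c q : ℝ}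

lemma elliptic_mul_sq_le_inner_sub (hκ : 0 ≤ κ) (hc : 0 < c) (hq : 0 ≤ q)
    (hA : Differentiable ℝ A)
    (hell : ∀ z ζ : F, c⁻¹ * (‖z‖ ^ 2 + κ ^ 2) ^ q * ‖ζ‖ ^ 2 ≤ ⟪fderiv ℝ A z ζ, ζ⟫)
    {a b : F} (hba : ‖b‖ ≤ ‖a‖) :
    c⁻¹ * (‖a‖ + κ) ^ (2 * q) * ‖a - b‖ ^ 2 ≤ 4 * 8 ^ q * ⟪A a - A b, a - b⟫ := by
  set w := a - b
  set z : ℝ → F := fun t => b + t • w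
  set φ : ℝ → ℝ := fun t => ⟪A (z t), w⟫
  have hz : ∀ t, HasDerivAt z w t := fun t => by
    simpa only [id, one_smul] using ((hasDerivAt_id t).smul_const w).const_add b
  have hφ : ∀ t, HasDerivAt φ ⟪fderiv ℝ A (z t) w, w⟫ t := fun t => by
    simpa using ((hA (z t)).hasFDerivAt.comp_hasDerivAt t (hz t)).inner ℝ (hasDerivAt_const t w)
  have h8 : (0 : ℝ) < 8 ^ q := by positivity
  have hderiv_nonneg : ∀ t, 0 ≤ deriv φ t := fun t =>
    (hφ t).deriv ▸ (hell (z t) w).trans' (by positivity)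
  have hderiv_ge : ∀ t ∈ Icc (3 / 4 : ℝ) 1,
      c⁻¹ * ((8 ^ q)⁻¹ * (‖a‖ + κ) ^ (2 * q)) * ‖w‖ ^ 2 ≤ deriv φ t := fun t ht => by
    rw [(hφ t).deriv]
    refine le_trans ?_ (hell (z t) w)
    gcongr
    rw [inv_mul_le_iff₀ h8]
    exact rpow_two_mul_le_eight_rpow_mul (norm_nonneg a)
      (half_norm_le_norm_add_smul_sub hba ht) hκ hq
  have key := mul_sub_le_sub_of_le_deriv (fun t => (hφ t).differentiableAt)
    (by norm_num : (0 : ℝ) ≤ 3 / 4) (by norm_num : (3 / 4 : ℝ) ≤ 1)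
    (fun t _ => hderiv_nonneg t) (fun t ht => hderiv_ge t (Ioo_subset_Icc_self ht))
  simp only [φ, z, zero_smul, add_zero, one_smul, w, add_sub_cancel, ← inner_sub_left] at key
  field_simp at key
  rw [mul_assoc, inv_mul_le_iff₀ hc]
  linarith

lemma elliptic_mul_le_norm_sub (hκ : 0 ≤ κ) (hc : 0 < c) (hq : 0 ≤ q)
    (hA : Differentiable ℝ A)
    (hell : ∀ z ζ : F, c⁻¹ * (‖z‖ ^ 2 + κ ^ 2) ^ q * ‖ζ‖ ^ 2 ≤ ⟪fderiv ℝ A z ζ, ζ⟫)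
    {a b : F} (hba : ‖b‖ ≤ ‖a‖) :
    c⁻¹ * (‖a‖ + κ) ^ (2 * q) * ‖a - b‖ ≤ 4 * 8 ^ q * ‖A a - A b‖ := by
  rcases eq_or_ne a b with rfl | hab
  · simp
  have hpos : 0 < ‖a - b‖ := norm_sub_pos_iff.2 hab
  refine le_of_mul_le_mul_right ?_ hpos
  calc c⁻¹ * (‖a‖ + κ) ^ (2 * q) * ‖a - b‖ * ‖a - b‖
      = c⁻¹ * (‖a‖ + κ) ^ (2 * q) * ‖a - b‖ ^ 2 := by ring
    _ ≤ 4 * 8 ^ q * ⟪A a - A b, a - b⟫ := elliptic_mul_sq_le_inner_sub hκ hc hq hA hell hba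
    _ ≤ 4 * 8 ^ q * (‖A a - A b‖ * ‖a - b‖) := by gcongr; exact real_inner_le_norm _ _
    _ = 4 * 8 ^ q * ‖A a - A b‖ * ‖a - b‖ := by ring

end Elliptic

lemma rpow_mul_rpow_le_of_le_two_mul {u r δ s : ℝ} (hu : 0 ≤ u) (hr : 0 ≤ r) (hru : r ≤ 2 * u)
    (hs : 1 ≤ s) : (u ^ δ * r) ^ s ≤ 2 ^ (s - 1) * u ^ (δ * s + (s - 1)) * r := by
  rcases hu.eq_or_lt with rfl | hu
  · obtain rfl : r = 0 := by linarith
    rw [mul_zero, Real.zero_rpow (by linarith), mul_zero]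
  have hr' : r ^ (s - 1) ≤ 2 ^ (s - 1) * u ^ (s - 1) := by
    rw [← Real.mul_rpow (by norm_num) hu.le]
    exact Real.rpow_le_rpow hr hru (by linarith)
  calc (u ^ δ * r) ^ s = u ^ (δ * s) * r ^ (s - 1) * r := by
        rw [Real.mul_rpow (by positivity) hr, ← Real.rpow_mul hu.le, mul_assoc,
          ← Real.rpow_add_one' hr (by linarith), sub_add_cancel]
    _ ≤ u ^ (δ * s) * (2 ^ (s - 1) * u ^ (s - 1)) * r := by gcongr
    _ = 2 ^ (s - 1) * u ^ (δ * s + (s - 1)) * r := by rw [Real.rpow_add hu]; ring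

lemma exists_rpow_norm_sub_le_mul_norm_sub {F : Type*} [NormedAddCommGroup F]
    [InnerProductSpace ℝ F] {E A : F → F} {p κ c γ : ℝ} (hp : 2 ≤ p) (hκ : 0 ≤ κ) (hc : 0 < c)
    (hγ : γ ∈ Icc (1 / (p - 1)) 1) (hE : ∀ ξ, E ξ = (‖ξ‖ + κ) ^ (γ * p - γ - 1) • ξ)
    (hA : Differentiable ℝ A)
    (hell : ∀ z ζ : F, c⁻¹ * (‖z‖ ^ 2 + κ ^ 2) ^ ((p - 2) / 2) * ‖ζ‖ ^ 2 ≤ ⟪fderiv ℝ A z ζ, ζ⟫) :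
    ∃ C, 0 < C ∧ ∀ a b, ‖E a - E b‖ ^ (1 / γ) ≤ C * ‖A a - A b‖ := by
  have hp1 : 0 < p - 1 := by linarith
  have hγ0 : 0 < γ := (one_div_pos.2 hp1).trans_le hγ.1
  set δ := γ * p - γ - 1
  set s := 1 / γ
  set q := (p - 2) / 2
  have hδ : 0 ≤ δ := by
    have := (div_le_iff₀ hp1).1 hγ.1
    simp only [δ]; linarith
  have hs : 1 ≤ s := one_le_one_div hγ0 hγ.2
  have hq : 0 ≤ q := by simp only [q]; linarith
  have hexp : δ * s + (s - 1) = 2 * q := by simp only [δ, s, q]; field_simp; ring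
  refine ⟨(1 + δ) ^ s * 2 ^ (s - 1) * c * (4 * 8 ^ q), by positivity, fun a b => ?_⟩
  wlog hba : ‖b‖ ≤ ‖a‖ generalizing a b
  · rw [norm_sub_rev, norm_sub_rev (A a)]
    exact this b a (le_of_not_ge hba)
  set u := ‖a‖ + κ
  have hru : ‖a - b‖ ≤ 2 * u := by
    have := norm_sub_le a b
    simp only [u]; linarith
  calc ‖E a - E b‖ ^ s ≤ ((1 + δ) * (u ^ δ * ‖a - b‖)) ^ s := by
        refine Real.rpow_le_rpow (norm_nonneg _) ?_ (by linarith)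
        rw [hE, hE, ← mul_assoc]
        exact norm_rpow_smul_sub_rpow_smul_le_s6 hκ hδ hba
    _ = (1 + δ) ^ s * (u ^ δ * ‖a - b‖) ^ s := Real.mul_rpow (by linarith) (by positivity)
    _ ≤ (1 + δ) ^ s * (2 ^ (s - 1) * u ^ (2 * q) * ‖a - b‖) := by
        rw [← hexp]
        gcongr
        exact rpow_mul_rpow_le_of_le_two_mul (by positivity) (norm_nonneg _) hru hs
    _ = (1 + δ) ^ s * 2 ^ (s - 1) * c * (c⁻¹ * u ^ (2 * q) * ‖a - b‖) := by
        field_simp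
    _ ≤ (1 + δ) ^ s * 2 ^ (s - 1) * c * (4 * 8 ^ q * ‖A a - A b‖) :=
        mul_le_mul_of_nonneg_left (elliptic_mul_le_norm_sub hκ hc hq hA hell hba)
          (by positivity)
    _ = (1 + δ) ^ s * 2 ^ (s - 1) * c * (4 * 8 ^ q) * ‖A a - A b‖ := by ring

lemma lintegral_lintegral_ofReal_le_const_mul {X Y : Type*} [MeasurableSpace X]
    [MeasurableSpace Y] {μ : Measure X} {ν : Measure Y} {f g : X → Y → ℝ} {C : ℝ} (hC : 0 ≤ C)
    (h : ∀ x y, f x y ≤ C * g x y) :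
    ∫⁻ x, ∫⁻ y, ENNReal.ofReal (f x y) ∂ν ∂μ ≤
      ENNReal.ofReal C * ∫⁻ x, ∫⁻ y, ENNReal.ofReal (g x y) ∂ν ∂μ := by
  calc ∫⁻ x, ∫⁻ y, ENNReal.ofReal (f x y) ∂ν ∂μ
      ≤ ∫⁻ x, ∫⁻ y, ENNReal.ofReal C * ENNReal.ofReal (g x y) ∂ν ∂μ := by
        gcongr with x y
        rw [← ENNReal.ofReal_mul hC]
        exact ENNReal.ofReal_le_ofReal (h x y)
    _ = ENNReal.ofReal C * ∫⁻ x, ∫⁻ y, ENNReal.ofReal (g x y) ∂ν ∂μ := by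
        simp only [lintegral_const_mul' _ _ ENNReal.ofReal_ne_top]

theorem statement6_general (n : ℕ)
    (Ω : Set (EuclideanSpace ℝ (Fin n)))
    (σ : ℝ) (α β : ℝ)
    (p κ c γ : ℝ) (hp : 2 ≤ p) (hκ : κ ∈ Set.Icc (0:ℝ) 1) (hc : 1 ≤ c)
    (hγ : γ ∈ Set.Icc (1/(p-1)) 1)
    (d : EuclideanSpace ℝ (Fin n) → ℝ)
    (hd : ∀ x, d x = Metric.infDist x (frontier Ω))
    (E : EuclideanSpace ℝ (Fin n) → EuclideanSpace ℝ (Fin n))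
    (hE : ∀ ξ : EuclideanSpace ℝ (Fin n), E ξ = ((‖ξ‖ + κ) ^ (γ * p - γ - 1)) • ξ)
    (A : EuclideanSpace ℝ (Fin n) → EuclideanSpace ℝ (Fin n))
    (hA : ContDiff ℝ 1 A)
    (hell : ∀ z ζ : EuclideanSpace ℝ (Fin n),
      c⁻¹ * (‖z‖ ^ 2 + κ ^ 2) ^ ((p - 2) / 2) * ‖ζ‖ ^ 2 ≤ ⟪fderiv ℝ A z ζ, ζ⟫) :
    ∃ C : ℝ, 0 < C ∧
      ∀ v : EuclideanSpace ℝ (Fin n) → EuclideanSpace ℝ (Fin n), Measurable v →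
      ∫⁻ x in Ω, ∫⁻ y in Ω,
          ENNReal.ofReal (d x ^ α * d y ^ β *
            (‖E (v x) - E (v y)‖ ^ (1/γ) / ‖x - y‖ ^ ((n : ℝ) + σ)))
        ≤ ENNReal.ofReal C *
          ∫⁻ x in Ω, ∫⁻ y in Ω,
            ENNReal.ofReal (d x ^ α * d y ^ β *
              (‖A (v x) - A (v y)‖ / ‖x - y‖ ^ ((n : ℝ) + σ))) := by
  obtain ⟨C, hC, hEA⟩ := exists_rpow_norm_sub_le_mul_norm_sub hp hκ.1 (by linarith) hγ hE
    (hA.differentiable one_ne_zero) hell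
  refine ⟨C, hC, fun v _ => lintegral_lintegral_ofReal_le_const_mul hC.le fun x y => ?_⟩
  have hweight : 0 ≤ d x ^ α * d y ^ β := by
    rw [hd, hd]
    exact mul_nonneg (Real.rpow_nonneg Metric.infDist_nonneg _)
      (Real.rpow_nonneg Metric.infDist_nonneg _)
  calc d x ^ α * d y ^ β * (‖E (v x) - E (v y)‖ ^ (1 / γ) / ‖x - y‖ ^ ((n : ℝ) + σ))
      ≤ d x ^ α * d y ^ β * (C * ‖A (v x) - A (v y)‖ / ‖x - y‖ ^ ((n : ℝ) + σ)) := by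
        gcongr
        exact hEA _ _
    _ = C * (d x ^ α * d y ^ β * (‖A (v x) - A (v y)‖ / ‖x - y‖ ^ ((n : ℝ) + σ))) := by ring

/-- weighted Gagliardo-seminorm comparison: under the ellipticity condition
on `A`, with `E(ξ) = (|ξ| + κ)^(γp - γ - 1) ξ`, there is `C = C(p,γ,c) > 0` such that for
every measurable `v : Ω → ℝⁿ`,
`∫_Ω ∫_Ω d^α(x) d^β(y) |E(v(x)) - E(v(y))|^{1/γ} / |x-y|^{n+σ} dx dy
  ≤ C ∫_Ω ∫_Ω d^α(x) d^β(y) |A(v(x)) - A(v(y))| / |x-y|^{n+σ} dx dy`. -/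
theorem statement6 (n : ℕ) (hn : 2 ≤ n)
    (Ω : Set (EuclideanSpace ℝ (Fin n))) (hΩo : IsOpen Ω) (hΩb : Bornology.IsBounded Ω)
    (σ : ℝ) (hσ : σ ∈ Set.Ioo (0:ℝ) 1) (α β : ℝ) (hα : 0 ≤ α) (hβ : 0 ≤ β)
    (p κ c γ : ℝ) (hp : 2 ≤ p) (hκ : κ ∈ Set.Icc (0:ℝ) 1) (hc : 1 ≤ c)
    (hγ : γ ∈ Set.Icc (1/(p-1)) 1)
    (d : EuclideanSpace ℝ (Fin n) → ℝ)
    (hd : ∀ x, d x = Metric.infDist x (frontier Ω))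
    (E : EuclideanSpace ℝ (Fin n) → EuclideanSpace ℝ (Fin n))
    (hE : ∀ ξ : EuclideanSpace ℝ (Fin n), E ξ = ((‖ξ‖ + κ) ^ (γ * p - γ - 1)) • ξ)
    (A : EuclideanSpace ℝ (Fin n) → EuclideanSpace ℝ (Fin n))
    (hA : ContDiff ℝ 1 A)
    (hell : ∀ z ζ : EuclideanSpace ℝ (Fin n),
      c⁻¹ * (‖z‖ ^ 2 + κ ^ 2) ^ ((p - 2) / 2) * ‖ζ‖ ^ 2 ≤ ⟪fderiv ℝ A z ζ, ζ⟫) :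
    ∃ C : ℝ, 0 < C ∧
      ∀ v : EuclideanSpace ℝ (Fin n) → EuclideanSpace ℝ (Fin n), Measurable v →
      ∫⁻ x in Ω, ∫⁻ y in Ω,
          ENNReal.ofReal (d x ^ α * d y ^ β *
            (‖E (v x) - E (v y)‖ ^ (1/γ) / ‖x - y‖ ^ ((n : ℝ) + σ)))
        ≤ ENNReal.ofReal C *
          ∫⁻ x in Ω, ∫⁻ y in Ω,
            ENNReal.ofReal (d x ^ α * d y ^ β *
              (‖A (v x) - A (v y)‖ / ‖x - y‖ ^ ((n : ℝ) + σ))) :=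
  statement6_general n Ω σ α β p κ c γ hp hκ hc hγ d hd E hE A hA hell
end

section
/- Let n ≥ 2, let Ω ⊂ ℝⁿ be an open bounded set, σ ∈ (0,1), α, β ≥ 0, p ≥ 2, κ ∈ [0,1], c ≥ 1, and let A : ℝⁿ → ℝⁿ be continuously differentiable with ⟨∂_z A(z) ζ, ζ⟩ ≥ c^{−1} (|z|² + κ²)^{(p−2)/2} |ζ|². Then there is C = C(p, c) > 0 such that for every measurable v : Ω → ℝⁿ, ∫_Ω ∫_Ω d^α(x) d^β(y) |v(x) − v(y)|^{p−1} / |x−y|^{n+σ} dx dy ≤ C ∫_Ω ∫_Ω d^α(x) d^β(y) |A(v(x)) − A(v(y))| / |x−y|^{n+σ} dx dy; that is, [v]_{W_G^{σ/(p−1), p−1}(Ω;α,β)}^{p−1} ≤ C [A∘v]_{W_G^{σ,1}(Ω;α,β)}. (This is the case γ = 1/(p−1) of the paper's Theorem 1.3, in which E is the identity map.) -/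
/-!
The inequality holds pointwise in the integrand. Integrating the ellipticity of `A` along the
segment `z₂ + t (z₁ - z₂)`, `t ∈ [0,1]`, bounds `⟪A z₁ - A z₂, z₁ - z₂⟫` from below by
`c⁻¹ |z₁ - z₂|² ∫₀¹ (|z₂ + t (z₁ - z₂)|² + κ²)^{(p-2)/2} dt`. Since `p ≥ 2`, the weight is at least
`(|z₁ - z₂|/4)^{p-2}` on a quarter of the segment, whether or not the segment passes near the
origin, so `|z₁ - z₂|^{p-1} ≤ c 4^{p-1} |A z₁ - A z₂|`.
-/

open MeasureTheory Set
open scoped ENNReal RealInnerProductSpace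

section Segment

variable {E : Type*} [SeminormedAddCommGroup E] [NormedSpace ℝ E]

/-- If `[0, 1/4]` brings `z + t • w` within `‖w‖/4` of the origin, the triangle inequality keeps
it at least `‖w‖/4` away on `[3/4, 1]`. -/
lemma exists_quarter_norm_add_smul_ge (z w : E) :
    ∃ a : ℝ, 0 ≤ a ∧ a + 1 / 4 ≤ 1 ∧ ∀ t ∈ Icc a (a + 1 / 4), ‖w‖ / 4 ≤ ‖z + t • w‖ := by
  by_cases hnear : ∃ s ∈ Icc (0 : ℝ) (1 / 4), ‖z + s • w‖ < ‖w‖ / 4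
  · obtain ⟨s, ⟨hs0, hs1⟩, hs⟩ := hnear
    refine ⟨3 / 4, by norm_num, by norm_num, fun t ⟨ht0, _⟩ => ?_⟩
    have hdiff : (t - s) • w = (z + t • w) - (z + s • w) := by rw [sub_smul]; abel
    have : (t - s) * ‖w‖ ≤ ‖z + t • w‖ + ‖z + s • w‖ := by
      rw [← Real.norm_of_nonneg (by linarith : 0 ≤ t - s), ← norm_smul, hdiff]
      exact norm_sub_le _ _
    nlinarith [norm_nonneg w]
  · push Not at hnear
    exact ⟨0, le_rfl, by norm_num, fun t ht => hnear t (by simpa using ht)⟩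

end Segment

lemma rpow_le_sq_add_sq_rpow_half {r x κ q : ℝ} (hr : 0 ≤ r) (hrx : r ≤ x) (hq : 0 ≤ q) :
    r ^ q ≤ (x ^ 2 + κ ^ 2) ^ (q / 2) := by
  have hr2 : r ^ q = (r ^ 2) ^ (q / 2) := by
    rw [← Real.rpow_natCast, ← Real.rpow_mul hr]
    ring_nf
  rw [hr2]
  exact Real.rpow_le_rpow (by positivity) (by nlinarith) (by linarith)

section Elliptic

variable {E : Type*} [NormedAddCommGroup E] [InnerProductSpace ℝ E] {A : E → E}

lemma integral_inner_fderiv_segment (hA : ContDiff ℝ 1 A) (z w : E) :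
    ∫ t in (0 : ℝ)..1, ⟪fderiv ℝ A (z + t • w) w, w⟫ = ⟪A (z + w) - A z, w⟫ := by
  have hderiv : ∀ t : ℝ,
      HasDerivAt (fun t : ℝ => ⟪A (z + t • w), w⟫) ⟪fderiv ℝ A (z + t • w) w, w⟫ t := by
    intro t
    have hline : HasDerivAt (fun t : ℝ => z + t • w) w t := by
      simpa using ((hasDerivAt_id t).smul_const w).const_add z
    have hAt := ((hA.differentiable one_ne_zero _).hasFDerivAt.comp_hasDerivAt t hline)
    simpa using hAt.inner ℝ (hasDerivAt_const t w)
  have hcont : Continuous fun t : ℝ => ⟪fderiv ℝ A (z + t • w) w, w⟫ := by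
    have := hA.continuous_fderiv one_ne_zero
    fun_prop
  rw [intervalIntegral.integral_eq_sub_of_hasDerivAt (fun t _ => hderiv t)
    (hcont.intervalIntegrable 0 1), inner_sub_left]
  simp

variable {p κ c : ℝ}

theorem norm_sub_rpow_le_mul_norm_sub_of_elliptic (hc : 0 < c) (hp : 2 ≤ p)
    (hA : ContDiff ℝ 1 A)
    (hell : ∀ z ζ : E, c⁻¹ * (‖z‖ ^ 2 + κ ^ 2) ^ ((p - 2) / 2) * ‖ζ‖ ^ 2 ≤ ⟪fderiv ℝ A z ζ, ζ⟫)
    (z₁ z₂ : E) :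
    ‖z₁ - z₂‖ ^ (p - 1) ≤ c * 4 ^ (p - 1) * ‖A z₁ - A z₂‖ := by
  set w := z₁ - z₂
  rcases eq_or_ne w 0 with hw | hw
  · rw [hw, norm_zero, Real.zero_rpow (by linarith)]
    positivity
  have hw0 : 0 < ‖w‖ := norm_pos_iff.2 hw
  obtain ⟨a, ha0, ha1, hfar⟩ := exists_quarter_norm_add_smul_ge z₂ w
  set g : ℝ → ℝ := fun t => ⟪fderiv ℝ A (z₂ + t • w) w, w⟫
  have hg : Continuous g := by
    have := hA.continuous_fderiv one_ne_zero
    fun_prop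
  have hg0 : ∀ t, 0 ≤ g t := fun t => le_trans (by positivity) (hell _ w)
  have hgK : ∀ t ∈ Icc a (a + 1 / 4), c⁻¹ * (‖w‖ / 4) ^ (p - 2) * ‖w‖ ^ 2 ≤ g t := by
    intro t ht
    refine le_trans ?_ (hell _ w)
    gcongr
    exact rpow_le_sq_add_sq_rpow_half (by positivity) (hfar t ht) (by linarith)
  have key : c⁻¹ * (‖w‖ / 4) ^ (p - 1) * ‖w‖ ≤ ‖A z₁ - A z₂‖ * ‖w‖ :=
    calc c⁻¹ * (‖w‖ / 4) ^ (p - 1) * ‖w‖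
        = ∫ _ in a..a + 1 / 4, c⁻¹ * (‖w‖ / 4) ^ (p - 2) * ‖w‖ ^ 2 := by
          rw [intervalIntegral.integral_const, smul_eq_mul, show p - 1 = p - 2 + 1 by ring,
            Real.rpow_add_one (by positivity)]
          ring
      _ ≤ ∫ t in a..a + 1 / 4, g t :=
          intervalIntegral.integral_mono_on (by linarith) intervalIntegrable_const
            (hg.intervalIntegrable _ _) hgK
      _ ≤ ∫ t in (0 : ℝ)..1, g t :=
          intervalIntegral.integral_mono_interval ha0 (by linarith) ha1
            (Filter.Eventually.of_forall hg0) (hg.intervalIntegrable _ _)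
      _ = ⟪A z₁ - A z₂, w⟫ := by
          rw [integral_inner_fderiv_segment hA, add_sub_cancel]
      _ ≤ ‖A z₁ - A z₂‖ * ‖w‖ := real_inner_le_norm _ _
  have hquarter := le_of_mul_le_mul_right key hw0
  rw [Real.div_rpow hw0.le (by norm_num)] at hquarter
  have h4 : (0 : ℝ) < 4 ^ (p - 1) := by positivity
  calc ‖w‖ ^ (p - 1) = c * 4 ^ (p - 1) * (c⁻¹ * (‖w‖ ^ (p - 1) / 4 ^ (p - 1))) := by
        field_simp
    _ ≤ c * 4 ^ (p - 1) * ‖A z₁ - A z₂‖ := by gcongr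

end Elliptic

lemma ofReal_mul_le_ofReal_mul_ofReal_mul {D X Y C : ℝ} (hX : 0 ≤ X) (hC : 0 ≤ C)
    (h : X ≤ C * Y) : ENNReal.ofReal (D * X) ≤ ENNReal.ofReal C * ENNReal.ofReal (D * Y) := by
  rcases le_or_gt 0 D with hD | hD
  · rw [← ENNReal.ofReal_mul hC]
    exact ENNReal.ofReal_le_ofReal (by nlinarith)
  · rw [ENNReal.ofReal_of_nonpos (mul_nonpos_of_nonpos_of_nonneg hD.le hX)]
    exact bot_le

lemma lintegral_lintegral_le_const_mul {α β : Type*} [MeasurableSpace α] [MeasurableSpace β]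
    {μ : Measure α} {ν : Measure β} {f g : α → β → ℝ≥0∞} {C : ℝ≥0∞} (hC : C ≠ ∞)
    (h : ∀ x y, f x y ≤ C * g x y) :
    ∫⁻ x, ∫⁻ y, f x y ∂ν ∂μ ≤ C * ∫⁻ x, ∫⁻ y, g x y ∂ν ∂μ := by
  rw [← lintegral_const_mul' _ _ hC]
  refine lintegral_mono fun x => ?_
  rw [← lintegral_const_mul' _ _ hC]
  exact lintegral_mono (h x)

theorem statement7_general (n : ℕ)
    (Ω : Set (EuclideanSpace ℝ (Fin n)))
    (σ : ℝ) (α β : ℝ)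
    (p κ c : ℝ) (hp : 2 ≤ p) (hc : 1 ≤ c)
    (d : EuclideanSpace ℝ (Fin n) → ℝ)
    (A : EuclideanSpace ℝ (Fin n) → EuclideanSpace ℝ (Fin n))
    (hA : ContDiff ℝ 1 A)
    (hell : ∀ z ζ : EuclideanSpace ℝ (Fin n),
      c⁻¹ * (‖z‖ ^ 2 + κ ^ 2) ^ ((p - 2) / 2) * ‖ζ‖ ^ 2 ≤ ⟪fderiv ℝ A z ζ, ζ⟫) :
    ∃ C : ℝ, 0 < C ∧
      ∀ v : EuclideanSpace ℝ (Fin n) → EuclideanSpace ℝ (Fin n), Measurable v →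
      ∫⁻ x in Ω, ∫⁻ y in Ω,
          ENNReal.ofReal (d x ^ α * d y ^ β *
            (‖v x - v y‖ ^ (p - 1) / ‖x - y‖ ^ ((n : ℝ) + σ)))
        ≤ ENNReal.ofReal C *
          ∫⁻ x in Ω, ∫⁻ y in Ω,
            ENNReal.ofReal (d x ^ α * d y ^ β *
              (‖A (v x) - A (v y)‖ / ‖x - y‖ ^ ((n : ℝ) + σ))) := by
  have hc0 : 0 < c := one_pos.trans_le hc
  refine ⟨c * 4 ^ (p - 1), by positivity, fun v _ => ?_⟩
  refine lintegral_lintegral_le_const_mul ENNReal.ofReal_ne_top fun x y => ?_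
  refine ofReal_mul_le_ofReal_mul_ofReal_mul (by positivity) (by positivity) ?_
  rw [← mul_div_assoc]
  exact div_le_div_of_nonneg_right
    (norm_sub_rpow_le_mul_norm_sub_of_elliptic hc0 hp hA hell (v x) (v y)) (by positivity)

/-- the case `γ = 1/(p-1)` of the seminorm comparison: under the ellipticity
condition on `A`, there is `C = C(p,c) > 0` such that for every measurable `v : Ω → ℝⁿ`,
`∫_Ω ∫_Ω d^α(x) d^β(y) |v(x) - v(y)|^{p-1} / |x-y|^{n+σ} dx dy
  ≤ C ∫_Ω ∫_Ω d^α(x) d^β(y) |A(v(x)) - A(v(y))| / |x-y|^{n+σ} dx dy`. -/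
theorem statement7 (n : ℕ) (hn : 2 ≤ n)
    (Ω : Set (EuclideanSpace ℝ (Fin n))) (hΩo : IsOpen Ω) (hΩb : Bornology.IsBounded Ω)
    (σ : ℝ) (hσ : σ ∈ Set.Ioo (0:ℝ) 1) (α β : ℝ) (hα : 0 ≤ α) (hβ : 0 ≤ β)
    (p κ c : ℝ) (hp : 2 ≤ p) (hκ : κ ∈ Set.Icc (0:ℝ) 1) (hc : 1 ≤ c)
    (d : EuclideanSpace ℝ (Fin n) → ℝ)
    (hd : ∀ x, d x = Metric.infDist x (frontier Ω))
    (A : EuclideanSpace ℝ (Fin n) → EuclideanSpace ℝ (Fin n))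
    (hA : ContDiff ℝ 1 A)
    (hell : ∀ z ζ : EuclideanSpace ℝ (Fin n),
      c⁻¹ * (‖z‖ ^ 2 + κ ^ 2) ^ ((p - 2) / 2) * ‖ζ‖ ^ 2 ≤ ⟪fderiv ℝ A z ζ, ζ⟫) :
    ∃ C : ℝ, 0 < C ∧
      ∀ v : EuclideanSpace ℝ (Fin n) → EuclideanSpace ℝ (Fin n), Measurable v →
      ∫⁻ x in Ω, ∫⁻ y in Ω,
          ENNReal.ofReal (d x ^ α * d y ^ β *
            (‖v x - v y‖ ^ (p - 1) / ‖x - y‖ ^ ((n : ℝ) + σ)))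
        ≤ ENNReal.ofReal C *
          ∫⁻ x in Ω, ∫⁻ y in Ω,
            ENNReal.ofReal (d x ^ α * d y ^ β *
              (‖A (v x) - A (v y)‖ / ‖x - y‖ ^ ((n : ℝ) + σ))) :=
  statement7_general n Ω σ α β p κ c hp hc d A hA hell
end

section
/- Let n ≥ 2, let Ω ⊂ ℝⁿ be an open bounded set, σ ∈ (0,1), α, β ≥ 0, R₀ > 0, and let r_k = 2^{−k} R₀ with layers Ω_k = {x ∈ Ω : r_{k+1} < d(x) ≤ r_k}. Then there is a constant C = C(n, σ) > 0 such that for every F ∈ L¹(Ω) and all integers j, k ≥ 1 with |k − j| ≥ 2, ∫_{Ω_k} ∫_{Ω_j} d^α(x) d^β(y) |F(x)| / |x − y|^{n+σ} dy dx ≤ C r_k^α r_j^β (r_k + r_j)^{−σ} ∫_{Ω_k} |F(x)| dx. -/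
/-!
For `x ∈ Ω_k` and `y ∈ Ω_j` with `|k - j| ≥ 2`, the distance to the boundary is 1-Lipschitz, so
`|x - y| ≥ |d x - d y| ≥ (r_k + r_j) / 8`, while the weights are at most `r_k^α r_j^β`. The inner
integral is therefore dominated by the tail integral
`∫_{|z| ≥ R} |z|^{-n-σ} dz = n |B₁| R^{-σ} / σ`, computed in polar coordinates, and what remains is
`|F|` integrated over `Ω_k`.
-/

open MeasureTheory Metric Set Module
open scoped ENNReal

theorem eqOn_pow_mul_indicator_rpow_neg {m : ℕ} (hm : 1 ≤ m) (σ R : ℝ) :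
    EqOn (fun t : ℝ ↦ t ^ (m - 1) • (Ici R).indicator (· ^ (-((m : ℝ) + σ))) t)
      ((Ici R).indicator (· ^ (-σ - 1))) (Ioi 0) := by
  intro t ht
  by_cases h : t ∈ Ici R
  · simp only [smul_eq_mul, indicator_of_mem h]
    rw [← Real.rpow_natCast, ← Real.rpow_add (mem_Ioi.1 ht), Nat.cast_sub hm, Nat.cast_one]
    ring_nf
  · simp [h]

theorem integrableOn_pow_mul_indicator_rpow_neg {m : ℕ} (hm : 1 ≤ m) {σ R : ℝ} (hσ : 0 < σ)
    (hR : 0 < R) :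
    IntegrableOn (fun t : ℝ ↦ t ^ (m - 1) • (Ici R).indicator (· ^ (-((m : ℝ) + σ))) t)
      (Ioi 0) := by
  refine (integrableOn_congr_fun (eqOn_pow_mul_indicator_rpow_neg hm σ R) measurableSet_Ioi).2 ?_
  refine Integrable.integrableOn ((integrable_indicator_iff measurableSet_Ici).2 ?_)
  exact (integrableOn_Ici_iff_integrableOn_Ioi enorm_ne_top).2
    (integrableOn_Ioi_rpow_of_lt (by linarith) hR)

theorem integral_pow_mul_indicator_rpow_neg {m : ℕ} (hm : 1 ≤ m) {σ R : ℝ} (hσ : 0 < σ)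
    (hR : 0 < R) :
    ∫ t in Ioi 0, t ^ (m - 1) • (Ici R).indicator (· ^ (-((m : ℝ) + σ))) t = R ^ (-σ) / σ := by
  rw [setIntegral_congr_fun measurableSet_Ioi (eqOn_pow_mul_indicator_rpow_neg hm σ R),
    setIntegral_indicator measurableSet_Ici, inter_eq_right.2 (Ici_subset_Ioi.2 hR),
    integral_Ici_eq_integral_Ioi, integral_Ioi_rpow_of_lt (by linarith) hR]
  ring_nf

section AddHaar

variable {E : Type*} [NormedAddCommGroup E] [NormedSpace ℝ E] [FiniteDimensional ℝ E]
  [MeasurableSpace E] [BorelSpace E] [Nontrivial E] (μ : Measure E) [μ.IsAddHaarMeasure]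
  {σ R : ℝ}

theorem setLIntegral_norm_rpow_neg_of_le_norm (hσ : 0 < σ) (hR : 0 < R) :
    ∫⁻ z in {z : E | R ≤ ‖z‖}, ENNReal.ofReal (‖z‖ ^ (-(finrank ℝ E + σ))) ∂μ
      = ENNReal.ofReal (finrank ℝ E * μ.real (ball 0 1) * (R ^ (-σ) / σ)) := by
  set g : ℝ → ℝ := (Ici R).indicator (· ^ (-(finrank ℝ E + σ)))
  have hE : 1 ≤ finrank ℝ E := finrank_pos
  have hg₀ : ∀ t, 0 ≤ g t := indicator_nonneg fun t ht ↦ Real.rpow_nonneg (hR.le.trans ht) _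
  have hg : Integrable (fun z : E ↦ g ‖z‖) μ :=
    (integrable_fun_norm_addHaar μ).2 (integrableOn_pow_mul_indicator_rpow_neg hE hσ hR)
  calc ∫⁻ z in {z : E | R ≤ ‖z‖}, ENNReal.ofReal (‖z‖ ^ (-(finrank ℝ E + σ))) ∂μ
      = ∫⁻ z, ENNReal.ofReal (g ‖z‖) ∂μ := by
        rw [← lintegral_indicator (measurableSet_le measurable_const measurable_norm)]
        congr 1 with z
        by_cases h : R ≤ ‖z‖ <;> simp [g, h]
    _ = ENNReal.ofReal (∫ z, g ‖z‖ ∂μ) :=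
        (ofReal_integral_eq_lintegral_ofReal hg (.of_forall fun z ↦ hg₀ ‖z‖)).symm
    _ = _ := by
        rw [integral_fun_norm_addHaar, integral_pow_mul_indicator_rpow_neg hE hσ hR,
          nsmul_eq_mul, smul_eq_mul, mul_assoc]

theorem setLIntegral_dist_rpow_neg_of_le_dist (hσ : 0 < σ) (hR : 0 < R) (x : E) :
    ∫⁻ y in {y | R ≤ dist y x}, ENNReal.ofReal (dist y x ^ (-(finrank ℝ E + σ))) ∂μ
      = ENNReal.ofReal (finrank ℝ E * μ.real (ball 0 1) * (R ^ (-σ) / σ)) := by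
  simp_rw [dist_eq_norm]
  exact ((measurePreserving_sub_right μ x).setLIntegral_comp_preimage_emb
    (measurableEmbedding_subRight x) _ {z | R ≤ ‖z‖}).trans
    (setLIntegral_norm_rpow_neg_of_le_norm μ hσ hR)

theorem setLIntegral_div_dist_rpow_le (hσ : 0 < σ) (hR : 0 < R) {x : E} {t : Set E}
    (hsep : ∀ y ∈ t, R ≤ dist y x) {w : E → ℝ} {W : ℝ} (hw : ∀ y ∈ t, 0 ≤ w y ∧ w y ≤ W) :
    ∫⁻ y in t, ENNReal.ofReal (w y / ‖x - y‖ ^ (finrank ℝ E + σ)) ∂μ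
      ≤ ENNReal.ofReal (W * (finrank ℝ E * μ.real (ball 0 1) * (R ^ (-σ) / σ))) := by
  have hpoint : ∀ y ∈ t, ENNReal.ofReal (w y / ‖x - y‖ ^ (finrank ℝ E + σ))
      ≤ ENNReal.ofReal W * ENNReal.ofReal (dist y x ^ (-(finrank ℝ E + σ))) := by
    intro y hy
    rw [← ENNReal.ofReal_mul ((hw y hy).1.trans (hw y hy).2), Real.rpow_neg dist_nonneg,
      ← div_eq_mul_inv, ← dist_eq_norm, dist_comm]
    exact ENNReal.ofReal_le_ofReal
      (div_le_div_of_nonneg_right (hw y hy).2 (Real.rpow_nonneg dist_nonneg _))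
  rcases t.eq_empty_or_nonempty with rfl | ⟨y₀, hy₀⟩
  · simp
  have hW : 0 ≤ W := (hw y₀ hy₀).1.trans (hw y₀ hy₀).2
  calc ∫⁻ y in t, ENNReal.ofReal (w y / ‖x - y‖ ^ (finrank ℝ E + σ)) ∂μ
      ≤ ∫⁻ y in t, ENNReal.ofReal W * ENNReal.ofReal (dist y x ^ (-(finrank ℝ E + σ))) ∂μ :=
        setLIntegral_mono (by fun_prop) hpoint
    _ ≤ ENNReal.ofReal W *
          ∫⁻ y in {y | R ≤ dist y x}, ENNReal.ofReal (dist y x ^ (-(finrank ℝ E + σ))) ∂μ := by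
        rw [lintegral_const_mul' _ _ ENNReal.ofReal_ne_top]
        gcongr
        exact hsep
    _ = _ := by rw [setLIntegral_dist_rpow_neg_of_le_dist μ hσ hR, ← ENNReal.ofReal_mul hW]

end AddHaar

theorem setLIntegral_le_ofReal_mul_integral_abs {α : Type*} [MeasurableSpace α] {μ : Measure α}
    {s : Set α} {F : α → ℝ} (hF : IntegrableOn F s μ) {f : α → ℝ≥0∞} {c : ℝ} (hc : 0 ≤ c)
    (hf : ∀ x ∈ s, f x ≤ ENNReal.ofReal (c * |F x|)) :
    ∫⁻ x in s, f x ∂μ ≤ ENNReal.ofReal (c * ∫ x in s, |F x| ∂μ) := by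
  have hFm : AEMeasurable (fun x ↦ ENNReal.ofReal c * ENNReal.ofReal |F x|) (μ.restrict s) :=
    (ENNReal.measurable_ofReal.comp_aemeasurable hF.aemeasurable.abs).const_mul _
  calc ∫⁻ x in s, f x ∂μ ≤ ∫⁻ x in s, ENNReal.ofReal c * ENNReal.ofReal |F x| ∂μ :=
        setLIntegral_mono_ae hFm (ae_of_all _ fun x hx ↦ (hf x hx).trans_eq (ENNReal.ofReal_mul hc))
    _ = ENNReal.ofReal (c * ∫ x in s, |F x| ∂μ) := by
        rw [lintegral_const_mul' _ _ ENNReal.ofReal_ne_top, ENNReal.ofReal_mul hc,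
          ofReal_integral_eq_lintegral_ofReal hF.abs (ae_of_all _ fun x ↦ abs_nonneg _)]

theorem le_dist_of_dyadic_layers {X : Type*} [PseudoMetricSpace X] {d : X → ℝ}
    (hd : LipschitzWith 1 d) {R₀ : ℝ} (hR₀ : 0 < R₀) {j k : ℕ} (hkj : k + 2 ≤ j) {x y : X}
    (hx : R₀ / 2 ^ (k + 1) < d x) (hy : d y ≤ R₀ / 2 ^ j) :
    (R₀ / 2 ^ k + R₀ / 2 ^ j) / 8 ≤ dist x y := by
  have hrj : R₀ / 2 ^ j ≤ R₀ / 2 ^ k / 4 := by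
    rw [div_div]
    refine div_le_div_of_nonneg_left hR₀.le (by positivity) ?_
    calc (2 : ℝ) ^ k * 4 = 2 ^ (k + 2) := by ring
      _ ≤ 2 ^ j := pow_le_pow_right₀ one_le_two hkj
  have hrk : R₀ / 2 ^ (k + 1) = R₀ / 2 ^ k / 2 := by rw [pow_succ, div_div]
  have hlip : d x - d y ≤ dist x y := by
    simpa [Real.dist_eq] using (le_abs_self _).trans (hd.dist_le_mul x y)
  have : 0 < R₀ / 2 ^ k := by positivity
  linarith

theorem statement11_general (n : ℕ) (hn : 2 ≤ n)
    (Ω : Set (EuclideanSpace ℝ (Fin n)))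
    (σ : ℝ) (hσ : σ ∈ Set.Ioo (0:ℝ) 1) (α β : ℝ) (hα : 0 ≤ α) (hβ : 0 ≤ β)
    (R₀ : ℝ) (hR₀ : 0 < R₀) (r : ℕ → ℝ) (hr : ∀ k, r k = R₀ / 2 ^ k)
    (d : EuclideanSpace ℝ (Fin n) → ℝ)
    (hd : ∀ x, d x = Metric.infDist x (frontier Ω))
    (Ωl : ℕ → Set (EuclideanSpace ℝ (Fin n)))
    (hΩl : ∀ k, Ωl k = {x ∈ Ω | r (k + 1) < d x ∧ d x ≤ r k}) :
    ∃ C : ℝ, 0 < C ∧ ∀ F : EuclideanSpace ℝ (Fin n) → ℝ, IntegrableOn F Ω →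
      ∀ j k : ℕ, 1 ≤ j → 1 ≤ k → 2 ≤ ((k : ℤ) - (j : ℤ)).natAbs →
      ∫⁻ x in Ωl k, ∫⁻ y in Ωl j,
          ENNReal.ofReal (d x ^ α * d y ^ β * (|F x| / ‖x - y‖ ^ ((n : ℝ) + σ)))
        ≤ ENNReal.ofReal (C * r k ^ α * r j ^ β * (r k + r j) ^ (-σ) *
            ∫ x in Ωl k, |F x|) := by
  have : NeZero n := ⟨by omega⟩
  have hσ₀ := hσ.1
  have hdlip : LipschitzWith 1 d := funext hd ▸ lipschitz_infDist_pt _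
  have hd₀ : ∀ x, 0 ≤ d x := fun x ↦ hd x ▸ infDist_nonneg
  have hr₀ : ∀ k, 0 < r k := fun k ↦ by rw [hr]; positivity
  have hmem : ∀ m, ∀ x ∈ Ωl m, x ∈ Ω ∧ r (m + 1) < d x ∧ d x ≤ r m := fun m x hx ↦ by
    rwa [hΩl] at hx
  set V := volume.real (ball (0 : EuclideanSpace ℝ (Fin n)) 1)
  have hV : 0 < V := ENNReal.toReal_pos (measure_ball_pos _ _ one_pos).ne' measure_ball_lt_top.ne
  refine ⟨n * V * 8 ^ σ / σ, by positivity, fun F hF j k _ _ hjk ↦ ?_⟩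
  have := hr₀ k
  have := hr₀ j
  set R := (r k + r j) / 8
  have hsep : ∀ x ∈ Ωl k, ∀ y ∈ Ωl j, R ≤ dist y x := by
    intro x hx y hy
    have hx' := (hmem k x hx).2
    have hy' := (hmem j y hy).2
    simp only [R, hr] at hx' hy' ⊢
    rcases (by omega : k + 2 ≤ j ∨ j + 2 ≤ k) with h | h
    · rw [dist_comm]; exact le_dist_of_dyadic_layers hdlip hR₀ h hx'.1 hy'.2
    · rw [add_comm]; exact le_dist_of_dyadic_layers hdlip hR₀ h hy'.1 hx'.2
  have hweight : ∀ x ∈ Ωl k, ∀ y ∈ Ωl j, 0 ≤ d x ^ α * d y ^ β * |F x| ∧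
      d x ^ α * d y ^ β * |F x| ≤ r k ^ α * r j ^ β * |F x| := fun x hx y hy ↦
    ⟨by have := hd₀ x; have := hd₀ y; positivity,
      mul_le_mul_of_nonneg_right (mul_le_mul (Real.rpow_le_rpow (hd₀ x) (hmem k x hx).2.2 hα)
        (Real.rpow_le_rpow (hd₀ y) (hmem j y hy).2.2 hβ) (Real.rpow_nonneg (hd₀ y) β)
        (Real.rpow_nonneg (hr₀ k).le α)) (abs_nonneg _)⟩
  have hRσ : R ^ (-σ) = 8 ^ σ * (r k + r j) ^ (-σ) := by
    rw [Real.div_rpow (by positivity) (by norm_num), Real.rpow_neg (by norm_num : (0 : ℝ) ≤ 8),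
      div_inv_eq_mul, mul_comm]
  refine setLIntegral_le_ofReal_mul_integral_abs (hF.mono_set fun x hx ↦ (hmem k x hx).1)
    (by positivity) fun x hx ↦ ?_
  have hinner := setLIntegral_div_dist_rpow_le volume hσ₀ (by positivity) (hsep x hx)
    (hweight x hx)
  simp only [finrank_euclideanSpace_fin, hRσ] at hinner
  simp_rw [← mul_div_assoc]
  exact hinner.trans_eq (congrArg ENNReal.ofReal (by ring))

/-- With `r_k = 2^{-k} R₀` and layers `Ω_k = {x ∈ Ω : r_{k+1} < d(x) ≤ r_k}`,
there is `C = C(n,σ) > 0` such that for every `F ∈ L¹(Ω)` and all integers `j, k ≥ 1` with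
`|k - j| ≥ 2`,
`∫_{Ω_k} ∫_{Ω_j} d^α(x) d^β(y) |F(x)| / |x-y|^{n+σ} dy dx
  ≤ C r_k^α r_j^β (r_k + r_j)^{-σ} ∫_{Ω_k} |F(x)| dx`. -/
theorem statement11 (n : ℕ) (hn : 2 ≤ n)
    (Ω : Set (EuclideanSpace ℝ (Fin n))) (hΩo : IsOpen Ω) (hΩb : Bornology.IsBounded Ω)
    (σ : ℝ) (hσ : σ ∈ Set.Ioo (0:ℝ) 1) (α β : ℝ) (hα : 0 ≤ α) (hβ : 0 ≤ β)
    (R₀ : ℝ) (hR₀ : 0 < R₀) (r : ℕ → ℝ) (hr : ∀ k, r k = R₀ / 2 ^ k)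
    (d : EuclideanSpace ℝ (Fin n) → ℝ)
    (hd : ∀ x, d x = Metric.infDist x (frontier Ω))
    (Ωl : ℕ → Set (EuclideanSpace ℝ (Fin n)))
    (hΩl : ∀ k, Ωl k = {x ∈ Ω | r (k + 1) < d x ∧ d x ≤ r k}) :
    ∃ C : ℝ, 0 < C ∧ ∀ F : EuclideanSpace ℝ (Fin n) → ℝ, IntegrableOn F Ω →
      ∀ j k : ℕ, 1 ≤ j → 1 ≤ k → 2 ≤ ((k : ℤ) - (j : ℤ)).natAbs →
      ∫⁻ x in Ωl k, ∫⁻ y in Ωl j,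
          ENNReal.ofReal (d x ^ α * d y ^ β * (|F x| / ‖x - y‖ ^ ((n : ℝ) + σ)))
        ≤ ENNReal.ofReal (C * r k ^ α * r j ^ β * (r k + r j) ^ (-σ) *
            ∫ x in Ωl k, |F x|) :=
  statement11_general n hn Ω σ hσ α β hα hβ R₀ hR₀ r hr d hd Ωl hΩl
end

section
/- Let n ≥ 2, let Ω ⊂ ℝⁿ be an open bounded set, σ ∈ (0,1), α, β > 0 with α + β > σ, R₀ > 0, and let r_k = 2^{−k} R₀ with layers Ω_k = {x ∈ Ω : r_{k+1} < d(x) ≤ r_k} and Ω₀ = {x ∈ Ω : 0 < d(x) ≤ R₀/2}. Then there is a constant C = C(n, σ, α, β) > 0 such that for every F ∈ L¹(Ω; ℝⁿ), ∑_{k,j ≥ 1, |k−j| ≥ 2} ∫_{Ω_k} ∫_{Ω_j} d^α(x) d^β(y) |F(x) − F(y)| / |x − y|^{n+σ} dx dy ≤ C R₀^{α+β−σ} ∫_{Ω₀} |F(x)| dx. -/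
/-!
Bound `|F x - F y| ≤ |F x| + |F y|`. Layers `Ω_k`, `Ω_j` with `|k - j| ≥ 2` are far apart relative
to the distance to the boundary: since `d` is 1-Lipschitz, `max (d x) (d y) ≤ 2 |x - y|` for
`x ∈ Ω_k`, `y ∈ Ω_j`. So the sum is at most the double integral over `Ω₀ × Ω₀` of
`(|F x| + |F y|)` times the kernel `d(x)^α d(y)^β |x - y|^{-n-σ}` restricted to such far pairs,
and it suffices that this kernel integrates in `y` to at most `C R₀^{α+β-σ}` for each fixed
`x ∈ Ω₀` (and symmetrically in `x`). For this write `d(y)^β ≤ R₀^{β-γ} (2|x - y|)^γ` with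
`max 0 (σ - α) ≤ γ < σ`, `γ ≤ β`: the remaining integral of `|x - y|^{γ-n-σ}` over
`|x - y| ≥ d(x)/2` scales like `d(x)^{γ-σ}`, and `d(x)^{α+γ-σ} ≤ R₀^{α+γ-σ}`.
-/

open MeasureTheory Metric Module Function
open scoped ENNReal

theorem rpow_neg_le_two_rpow_mul_one_add_rpow_neg {t p : ℝ} (ht : 1 ≤ t) (hp : 0 ≤ p) :
    t ^ (-p) ≤ 2 ^ p * (1 + t) ^ (-p) := by
  have ht0 : 0 < t := one_pos.trans_le ht
  rw [Real.rpow_neg ht0.le, Real.rpow_neg (by positivity), ← Real.inv_rpow ht0.le,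
    ← Real.inv_rpow (by positivity), ← Real.mul_rpow (by positivity) (by positivity)]
  gcongr
  rw [← div_eq_mul_inv, inv_eq_one_div, div_le_div_iff₀ ht0 (by positivity)]
  linarith

theorem rpow_le_rpow_sub_mul_rpow {u R t b γ : ℝ} (hu : 0 ≤ u) (huR : u ≤ R) (hut : u ≤ t)
    (hγ : 0 ≤ γ) (hγb : γ ≤ b) : u ^ b ≤ R ^ (b - γ) * t ^ γ := by
  calc u ^ b = u ^ (b - γ) * u ^ γ := by
        rw [← Real.rpow_add_of_nonneg hu (by linarith) hγ, sub_add_cancel]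
    _ ≤ R ^ (b - γ) * t ^ γ :=
        mul_le_mul (Real.rpow_le_rpow hu huR (by linarith)) (Real.rpow_le_rpow hu hut hγ)
          (by positivity) (Real.rpow_nonneg (hu.trans huR) _)

theorem ofReal_mul_norm_sub_div_le {F : Type*} [SeminormedAddCommGroup F] (A D : ℝ) (u v : F) :
    ENNReal.ofReal (A * (‖u - v‖ / D)) ≤ (‖u‖ₑ + ‖v‖ₑ) * ENNReal.ofReal (A / D) := by
  rw [mul_div_left_comm, ENNReal.ofReal_mul (norm_nonneg _), ofReal_norm]
  gcongr
  exact enorm_sub_le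

section Layers

variable {X : Type*}

theorem pairwise_disjoint_sep_layers {r : ℕ → ℝ} (hr : Antitone r) (f : X → ℝ) (s : Set X) :
    Pairwise (Disjoint on fun k => {x ∈ s | r (k + 1) < f x ∧ f x ≤ r k}) :=
  fun _ _ hij => ((hr.pairwise_disjoint_on_Ioc_succ hij).preimage f).mono
    (fun _ hx => hx.2) (fun _ hx => hx.2)

variable [PseudoMetricSpace X] {d : X → ℝ} {x y : X}

theorem max_le_two_mul_dist_of_le_of_two_mul_lt (hd : LipschitzWith 1 d) {t : ℝ}
    (hy : d y ≤ t) (hx : 2 * t < d x) : max (d x) (d y) ≤ 2 * dist x y := by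
  have := hd.le_add_mul x y
  simp only [NNReal.coe_one, one_mul] at this
  exact max_le (by linarith) (by linarith [dist_nonneg (x := x) (y := y)])

theorem max_le_two_mul_dist_of_mem_layers (hd : LipschitzWith 1 d) {r : ℕ → ℝ} (hr : Antitone r)
    (hr₂ : ∀ k, 2 * r (k + 1) ≤ r k) {k j : ℕ} (hkj : 2 ≤ ((k : ℤ) - j).natAbs)
    (hx : r (k + 1) < d x ∧ d x ≤ r k) (hy : r (j + 1) < d y ∧ d y ≤ r j) :
    max (d x) (d y) ≤ 2 * dist x y := by
  wlog hlt : k + 2 ≤ j generalizing k j x y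
  · rw [max_comm, dist_comm]
    exact this (by omega) hy hx (by omega)
  exact max_le_two_mul_dist_of_le_of_two_mul_lt hd (hy.2.trans (hr hlt))
    ((hr₂ (k + 1)).trans_lt hx.1)

end Layers

section DoubleIntegrals

variable {X : Type*} [MeasurableSpace X] {μ : Measure X} [SFinite μ]

theorem tsum_tsum_ite_setLIntegral_le {s : ℕ → Set X} (hs : ∀ k, MeasurableSet (s k))
    (hdisj : Pairwise (Disjoint on s)) {t : Set X} (ht : MeasurableSet t)
    {p : ℕ → ℕ → Prop} [∀ k j, Decidable (p k j)] (hst : ∀ k j, p k j → s k ⊆ t ∧ s j ⊆ t)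
    {f g : X → X → ℝ≥0∞} (hg : Measurable (uncurry g))
    (hfg : ∀ k j, p k j → ∀ᵐ x ∂μ.restrict (s k), ∀ᵐ y ∂μ.restrict (s j), f x y ≤ g x y) :
    ∑' k, ∑' j, (if p k j then ∫⁻ x in s k, ∫⁻ y in s j, f x y ∂μ ∂μ else 0)
      ≤ ∫⁻ x in t, ∫⁻ y in t, g x y ∂μ ∂μ := by
  have hu : ∀ k, MeasurableSet (s k ∩ t) := fun k => (hs k).inter ht
  have hudisj : Pairwise (Disjoint on fun k => s k ∩ t) := fun i j hij =>
    (hdisj hij).mono Set.inter_subset_left Set.inter_subset_left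
  have hgx : ∀ j, Measurable fun x => ∫⁻ y in s j ∩ t, g x y ∂μ := fun j =>
    hg.lintegral_prod_right'
  calc ∑' k, ∑' j, (if p k j then ∫⁻ x in s k, ∫⁻ y in s j, f x y ∂μ ∂μ else 0)
      ≤ ∑' k, ∑' j, ∫⁻ x in s k ∩ t, ∫⁻ y in s j ∩ t, g x y ∂μ ∂μ := by
        refine ENNReal.tsum_le_tsum fun k => ENNReal.tsum_le_tsum fun j => ?_
        split_ifs with hkj
        · obtain ⟨hk, hj⟩ := hst k j hkj
          rw [Set.inter_eq_left.2 hk, Set.inter_eq_left.2 hj]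
          exact lintegral_mono_ae ((hfg k j hkj).mono fun x hx => lintegral_mono_ae hx)
        · exact zero_le
    _ = ∫⁻ x in ⋃ k, s k ∩ t, ∫⁻ y in ⋃ j, s j ∩ t, g x y ∂μ ∂μ := by
        rw [lintegral_iUnion hu hudisj]
        refine tsum_congr fun k => ?_
        rw [← lintegral_tsum fun j => (hgx j).aemeasurable]
        exact lintegral_congr fun x => (lintegral_iUnion hu hudisj _).symm
    _ ≤ ∫⁻ x in t, ∫⁻ y in t, g x y ∂μ ∂μ := by
        have hut : (⋃ k, s k ∩ t) ⊆ t := Set.iUnion_subset fun k => Set.inter_subset_right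
        exact (lintegral_mono_set hut).trans (lintegral_mono fun x => lintegral_mono_set hut)

theorem lintegral_lintegral_add_mul_le {h : X → ℝ≥0∞} (hh : Measurable h)
    {K : X → X → ℝ≥0∞} (hK : Measurable (uncurry K)) {M₁ M₂ : ℝ≥0∞}
    (h₁ : ∀ᵐ x ∂μ, ∫⁻ y, K x y ∂μ ≤ M₁) (h₂ : ∀ᵐ y ∂μ, ∫⁻ x, K x y ∂μ ≤ M₂) :
    ∫⁻ x, ∫⁻ y, (h x + h y) * K x y ∂μ ∂μ ≤ (M₁ + M₂) * ∫⁻ x, h x ∂μ := by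
  have hKx : ∀ x, Measurable (K x) := fun x => hK.comp measurable_prodMk_left
  have hKy : ∀ y, Measurable fun x => K x y := fun y => hK.comp measurable_prodMk_right
  have hhK : Measurable fun x => ∫⁻ y, h x * K x y ∂μ :=
    ((hh.comp measurable_fst).mul hK).lintegral_prod_right'
  have hKh : AEMeasurable (uncurry fun x y => h y * K x y) (μ.prod μ) :=
    ((hh.comp measurable_snd).mul hK).aemeasurable
  calc ∫⁻ x, ∫⁻ y, (h x + h y) * K x y ∂μ ∂μ
      = ∫⁻ x, h x * ∫⁻ y, K x y ∂μ ∂μ + ∫⁻ y, h y * ∫⁻ x, K x y ∂μ ∂μ := by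
        simp_rw [add_mul]
        rw [lintegral_congr fun x => lintegral_add_left ((hKx x).const_mul _) _,
          lintegral_add_left hhK, lintegral_lintegral_swap hKh]
        congr 1
        · exact lintegral_congr fun x => lintegral_const_mul _ (hKx x)
        · exact lintegral_congr fun y => lintegral_const_mul _ (hKy y)
    _ ≤ ∫⁻ x, h x * M₁ ∂μ + ∫⁻ y, h y * M₂ ∂μ := by
        gcongr ?_ + ?_
        · exact lintegral_mono_ae (h₁.mono fun x hx => by gcongr)
        · exact lintegral_mono_ae (h₂.mono fun y hy => by gcongr)
    _ = (M₁ + M₂) * ∫⁻ x, h x ∂μ := by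
        rw [lintegral_mul_const _ hh, lintegral_mul_const _ hh]
        ring

end DoubleIntegrals

section FarKernel

variable {E : Type*} [NormedAddCommGroup E]

noncomputable def farKernel (s : E → ℝ) (a b q c : ℝ) (x y : E) : ℝ≥0∞ :=
  if max (s x) (s y) ≤ c * ‖x - y‖ then ENNReal.ofReal (s x ^ a * s y ^ b / ‖x - y‖ ^ q) else 0

theorem farKernel_swap (s : E → ℝ) (a b q c : ℝ) (x y : E) :
    farKernel s a b q c x y = farKernel s b a q c y x := by
  simp only [farKernel, max_comm (s x), norm_sub_rev x y, mul_comm (s x ^ a)]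

variable [MeasurableSpace E] [BorelSpace E] [SecondCountableTopology E]

theorem measurable_farKernel {s : E → ℝ} (hs : Measurable s) (a b q c : ℝ) :
    Measurable (uncurry (farKernel s a b q c)) := by
  refine Measurable.ite (measurableSet_le (by fun_prop) (by fun_prop)) ?_ measurable_const
  fun_prop

theorem tsum_ite_farLayers_le {μ : Measure E} [SFinite μ] {Ω : Set E} (hΩ : MeasurableSet Ω)
    {d : E → ℝ} (hd : LipschitzWith 1 d) {r : ℕ → ℝ} (hr_pos : ∀ k, 0 < r k)
    (hr₂ : ∀ k, 2 * r (k + 1) ≤ r k) {V : Type*} [NormedAddCommGroup V] [MeasurableSpace V]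
    [OpensMeasurableSpace V] {F G : E → V} (hG : Measurable G) (hFG : F =ᵐ[μ.restrict Ω] G)
    (a b q : ℝ) :
    ∑' k : ℕ, ∑' j : ℕ, (if 1 ≤ k ∧ 1 ≤ j ∧ 2 ≤ ((k : ℤ) - (j : ℤ)).natAbs then
        ∫⁻ x in {x ∈ Ω | r (k + 1) < d x ∧ d x ≤ r k},
          ∫⁻ y in {x ∈ Ω | r (j + 1) < d x ∧ d x ≤ r j},
            ENNReal.ofReal (d x ^ a * d y ^ b * (‖F x - F y‖ / ‖x - y‖ ^ q)) ∂μ ∂μ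
        else 0)
      ≤ ∫⁻ x in {x ∈ Ω | 0 < d x ∧ d x ≤ r 1}, ∫⁻ y in {x ∈ Ω | 0 < d x ∧ d x ≤ r 1},
          (‖G x‖ₑ + ‖G y‖ₑ) * farKernel d a b q 2 x y ∂μ ∂μ := by
  have hr_anti : Antitone r := antitone_nat_of_succ_le fun k => by linarith [hr₂ k, hr_pos (k + 1)]
  have hdm : Measurable d := hd.continuous.measurable
  have hlayer : ∀ u v : ℝ, MeasurableSet {x ∈ Ω | u < d x ∧ d x ≤ v} := fun u v =>
    hΩ.inter (hdm measurableSet_Ioc)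
  have hsub : ∀ k, 1 ≤ k → {x ∈ Ω | r (k + 1) < d x ∧ d x ≤ r k} ⊆ {x ∈ Ω | 0 < d x ∧ d x ≤ r 1} :=
    fun k hk x hx => ⟨hx.1, (hr_pos _).trans hx.2.1, hx.2.2.trans (hr_anti hk)⟩
  have hFG' : ∀ u v : ℝ, F =ᵐ[μ.restrict {x ∈ Ω | u < d x ∧ d x ≤ v}] G := fun u v =>
    ae_restrict_of_ae_restrict_of_subset (fun x hx => hx.1) hFG
  refine tsum_tsum_ite_setLIntegral_le (fun k => hlayer _ _)
    (pairwise_disjoint_sep_layers hr_anti d Ω) (hlayer _ _)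
    (fun k j hkj => ⟨hsub k hkj.1, hsub j hkj.2.1⟩)
    (((hG.enorm.comp measurable_fst).add (hG.enorm.comp measurable_snd)).mul
      (measurable_farKernel hdm ..)) fun k j hkj => ?_
  filter_upwards [ae_restrict_mem (hlayer _ _), hFG' _ _] with x hxk hx
  filter_upwards [ae_restrict_mem (hlayer _ _), hFG' _ _] with y hyj hy
  have hfar := max_le_two_mul_dist_of_mem_layers hd hr_anti hr₂ hkj.2.2 hxk.2 hyj.2
  rw [hx, hy, farKernel, if_pos (dist_eq_norm x y ▸ hfar)]
  exact ofReal_mul_norm_sub_div_le _ _ _ _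

end FarKernel

section HaarMeasure

variable {E : Type*} [NormedAddCommGroup E] [NormedSpace ℝ E] [FiniteDimensional ℝ E]
  [MeasurableSpace E] [BorelSpace E] (μ : Measure E) [μ.IsAddHaarMeasure]

theorem lintegral_comp_smul_addHaar (f : E → ℝ≥0∞) {r : ℝ} (hr : r ≠ 0) :
    ∫⁻ x, f (r • x) ∂μ = ENNReal.ofReal |(r ^ finrank ℝ E)⁻¹| * ∫⁻ x, f x ∂μ := by
  rw [← smul_eq_mul, ← lintegral_smul_measure, ← Measure.map_addHaar_smul μ hr]
  exact (lintegral_map_equiv f (MeasurableEquiv.smul₀ r hr)).symm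

theorem setLIntegral_norm_sub_rpow_neg_eq (p : ℝ) {ρ : ℝ} (hρ : 0 < ρ) (z : E) :
    ∫⁻ y in {y | ρ ≤ ‖y - z‖}, ENNReal.ofReal (‖y - z‖ ^ (-p)) ∂μ
      = ENNReal.ofReal (ρ ^ ((finrank ℝ E : ℝ) - p))
        * ∫⁻ v in {v | 1 ≤ ‖v‖}, ENNReal.ofReal (‖v‖ ^ (-p)) ∂μ := by
  set g : ℝ → E → ℝ≥0∞ := fun t => {v | t ≤ ‖v‖}.indicator fun v => ENNReal.ofReal (‖v‖ ^ (-p))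
  have hg : ∀ t, ∫⁻ v in {v | t ≤ ‖v‖}, ENNReal.ofReal (‖v‖ ^ (-p)) ∂μ = ∫⁻ v, g t v ∂μ :=
    fun t => (lintegral_indicator (measurableSet_le measurable_const measurable_norm) _).symm
  have hscale : ∀ w, g ρ (ρ • w) = ENNReal.ofReal (ρ ^ (-p)) * g 1 w := by
    intro w
    simp only [g, Set.indicator, Set.mem_ofPred_eq, norm_smul, Real.norm_of_nonneg hρ.le]
    by_cases hw : 1 ≤ ‖w‖
    · rw [if_pos (by nlinarith), if_pos hw, Real.mul_rpow hρ.le (norm_nonneg w),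
        ENNReal.ofReal_mul (by positivity)]
    · rw [if_neg (by nlinarith), if_neg hw, mul_zero]
  have hρd : ENNReal.ofReal (ρ ^ finrank ℝ E) * ENNReal.ofReal |(ρ ^ finrank ℝ E)⁻¹| = 1 := by
    rw [← ENNReal.ofReal_mul (by positivity), abs_of_pos (by positivity),
      mul_inv_cancel₀ (by positivity), ENNReal.ofReal_one]
  calc ∫⁻ y in {y | ρ ≤ ‖y - z‖}, ENNReal.ofReal (‖y - z‖ ^ (-p)) ∂μ
      = ∫⁻ y, g ρ (y - z) ∂μ :=
        (lintegral_indicator (measurableSet_le measurable_const (by fun_prop)) _).symm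
    _ = ENNReal.ofReal (ρ ^ finrank ℝ E) * ∫⁻ w, g ρ (ρ • w) ∂μ := by
        rw [lintegral_sub_right_eq_self, lintegral_comp_smul_addHaar μ _ hρ.ne', ← mul_assoc, hρd,
          one_mul]
    _ = ENNReal.ofReal (ρ ^ ((finrank ℝ E : ℝ) - p))
        * ∫⁻ v in {v | 1 ≤ ‖v‖}, ENNReal.ofReal (‖v‖ ^ (-p)) ∂μ := by
        simp_rw [hscale]
        rw [lintegral_const_mul' _ _ ENNReal.ofReal_ne_top, ← mul_assoc,
          ← ENNReal.ofReal_mul (by positivity), ← Real.rpow_natCast, ← Real.rpow_add hρ,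
          ← sub_eq_add_neg, hg]

theorem setLIntegral_one_le_norm_rpow_neg_lt_top {p : ℝ} (hp : (finrank ℝ E : ℝ) < p) :
    ∫⁻ v in {v | 1 ≤ ‖v‖}, ENNReal.ofReal (‖v‖ ^ (-p)) ∂μ < ∞ := by
  have hp0 : 0 ≤ p := (Nat.cast_nonneg _).trans hp.le
  calc ∫⁻ v in {v | 1 ≤ ‖v‖}, ENNReal.ofReal (‖v‖ ^ (-p)) ∂μ
      ≤ ∫⁻ v in {v | 1 ≤ ‖v‖}, ENNReal.ofReal (2 ^ p) * ENNReal.ofReal ((1 + ‖v‖) ^ (-p)) ∂μ :=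
        setLIntegral_mono' (measurableSet_le measurable_const measurable_norm) fun v hv => by
          rw [← ENNReal.ofReal_mul (by positivity)]
          exact ENNReal.ofReal_le_ofReal (rpow_neg_le_two_rpow_mul_one_add_rpow_neg hv hp0)
    _ ≤ ∫⁻ v, ENNReal.ofReal (2 ^ p) * ENNReal.ofReal ((1 + ‖v‖) ^ (-p)) ∂μ :=
        setLIntegral_le_lintegral _ _
    _ < ∞ := by
        rw [lintegral_const_mul' _ _ ENNReal.ofReal_ne_top]
        exact ENNReal.mul_lt_top ENNReal.ofReal_lt_top (finite_integral_one_add_norm hp)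

theorem exists_setLIntegral_farKernel_le {a b σ c : ℝ} (ha : 0 < a) (hb : 0 ≤ b) (hσ : 0 < σ)
    (hab : σ ≤ a + b) (hc : 0 < c) :
    ∃ C : ℝ, 0 < C ∧ ∀ (s : E → ℝ) (S : Set E) (R : ℝ) (x : E), MeasurableSet S →
      (∀ y ∈ S, 0 ≤ s y ∧ s y ≤ R) → 0 < s x → s x ≤ R →
      ∫⁻ y in S, farKernel s a b (finrank ℝ E + σ) c x y ∂μ
        ≤ ENNReal.ofReal (C * R ^ (a + b - σ)) := by
  -- `γ < σ` keeps the tail `‖x - y‖ ^ (γ - n - σ)` integrable, and `σ - a ≤ γ` lets the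
  -- leftover power `s x ^ (a + γ - σ)` be bounded by `R ^ (a + γ - σ)`.
  set γ := max 0 (σ - a)
  have hγ : 0 ≤ γ := le_max_left _ _
  have hγb : γ ≤ b := max_le hb (by linarith)
  have hγσ : γ < σ := max_lt hσ (by linarith)
  have haγ : 0 ≤ a + γ - σ := by linarith [le_max_right 0 (σ - a)]
  set p := (finrank ℝ E : ℝ) + σ - γ
  set T := ∫⁻ v in {v | 1 ≤ ‖v‖}, ENNReal.ofReal (‖v‖ ^ (-p)) ∂μ
  have hT : T ≤ ENNReal.ofReal (T.toReal + 1) := by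
    have hT_fin : T < ∞ := setLIntegral_one_le_norm_rpow_neg_lt_top μ (p := p) (by linarith)
    calc T = ENNReal.ofReal T.toReal := (ENNReal.ofReal_toReal hT_fin.ne).symm
      _ ≤ ENNReal.ofReal (T.toReal + 1) := ENNReal.ofReal_le_ofReal (by linarith)
  refine ⟨c ^ σ * (T.toReal + 1), by positivity, fun s S R x hS hsS hx hxR => ?_⟩
  have hR : 0 < R := hx.trans_le hxR
  set c₁ := s x ^ a * R ^ (b - γ) * c ^ γ
  have hpt : ∀ y ∈ S, farKernel s a b (finrank ℝ E + σ) c x y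
      ≤ ENNReal.ofReal c₁ * {y | s x / c ≤ ‖y - x‖}.indicator
          (fun y => ENNReal.ofReal (‖y - x‖ ^ (-p))) y := by
    intro y hy
    unfold farKernel
    split_ifs with hfar
    · have hxc : s x ≤ c * ‖y - x‖ := norm_sub_rev x y ▸ (le_max_left _ _).trans hfar
      have hyc : s y ≤ c * ‖y - x‖ := norm_sub_rev x y ▸ (le_max_right _ _).trans hfar
      have hxy : 0 < ‖y - x‖ := pos_of_mul_pos_right (hx.trans_le hxc) hc.le
      rw [Set.indicator_of_mem (s := {y | s x / c ≤ ‖y - x‖}) ((div_le_iff₀' hc).2 hxc),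
        ← ENNReal.ofReal_mul (by positivity), norm_sub_rev x y]
      refine ENNReal.ofReal_le_ofReal ?_
      calc s x ^ a * s y ^ b / ‖y - x‖ ^ ((finrank ℝ E : ℝ) + σ)
          ≤ s x ^ a * (R ^ (b - γ) * (c * ‖y - x‖) ^ γ) / ‖y - x‖ ^ ((finrank ℝ E : ℝ) + σ) := by
            gcongr
            exact rpow_le_rpow_sub_mul_rpow (hsS y hy).1 (hsS y hy).2 hyc hγ hγb
        _ = c₁ * ‖y - x‖ ^ (-p) := by
            have hpγ : (finrank ℝ E : ℝ) + σ = p + γ := by ring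
            rw [Real.mul_rpow hc.le hxy.le, Real.rpow_neg hxy.le, hpγ, Real.rpow_add hxy]
            field_simp
            rfl
    · exact zero_le
  calc ∫⁻ y in S, farKernel s a b (finrank ℝ E + σ) c x y ∂μ
      ≤ ∫⁻ y, ENNReal.ofReal c₁ * {y | s x / c ≤ ‖y - x‖}.indicator
          (fun y => ENNReal.ofReal (‖y - x‖ ^ (-p))) y ∂μ :=
        (setLIntegral_mono' hS hpt).trans (setLIntegral_le_lintegral _ _)
    _ = ENNReal.ofReal c₁ * (ENNReal.ofReal ((s x / c) ^ ((finrank ℝ E : ℝ) - p)) * T) := by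
        rw [lintegral_const_mul' _ _ ENNReal.ofReal_ne_top,
          lintegral_indicator (measurableSet_le measurable_const (by fun_prop)),
          setLIntegral_norm_sub_rpow_neg_eq μ p (by positivity)]
    _ ≤ ENNReal.ofReal c₁ * (ENNReal.ofReal ((s x / c) ^ ((finrank ℝ E : ℝ) - p))
          * ENNReal.ofReal (T.toReal + 1)) := by gcongr
    _ = ENNReal.ofReal (c₁ * (s x / c) ^ ((finrank ℝ E : ℝ) - p) * (T.toReal + 1)) := by
        have hc₁ : 0 ≤ c₁ := by positivity
        rw [← ENNReal.ofReal_mul (by positivity), ← ENNReal.ofReal_mul hc₁, ← mul_assoc]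
    _ ≤ ENNReal.ofReal (c ^ σ * (T.toReal + 1) * R ^ (a + b - σ)) := by
        refine ENNReal.ofReal_le_ofReal ?_
        have hexp : (s x / c) ^ ((finrank ℝ E : ℝ) - p) * c ^ γ = s x ^ (γ - σ) * c ^ σ := by
          rw [show (finrank ℝ E : ℝ) - p = γ - σ by ring, Real.div_rpow hx.le hc.le,
            div_mul_eq_mul_div, mul_div_assoc, ← Real.rpow_sub hc, sub_sub_cancel]
        calc c₁ * (s x / c) ^ ((finrank ℝ E : ℝ) - p) * (T.toReal + 1)
            = c ^ σ * (T.toReal + 1) * (s x ^ (a + γ - σ) * R ^ (b - γ)) := by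
              rw [show a + γ - σ = a + (γ - σ) by ring, Real.rpow_add hx]
              linear_combination (s x ^ a * R ^ (b - γ) * (T.toReal + 1)) * hexp
          _ ≤ c ^ σ * (T.toReal + 1) * (R ^ (a + γ - σ) * R ^ (b - γ)) := by
              gcongr
          _ = c ^ σ * (T.toReal + 1) * R ^ (a + b - σ) := by
              rw [← Real.rpow_add hR]
              ring_nf

theorem exists_lintegral_lintegral_farKernel_le {a b σ c : ℝ} (ha : 0 < a) (hb : 0 < b)
    (hσ : 0 < σ) (hab : σ ≤ a + b) (hc : 0 < c) :
    ∃ C : ℝ, 0 < C ∧ ∀ (s : E → ℝ) (S : Set E) (R : ℝ) (h : E → ℝ≥0∞), Measurable s →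
      MeasurableSet S → (∀ x ∈ S, 0 < s x ∧ s x ≤ R) → Measurable h →
      ∫⁻ x in S, ∫⁻ y in S, (h x + h y) * farKernel s a b (finrank ℝ E + σ) c x y ∂μ ∂μ
        ≤ ENNReal.ofReal (C * R ^ (a + b - σ)) * ∫⁻ x in S, h x ∂μ := by
  obtain ⟨C₁, hC₁, hK₁⟩ := exists_setLIntegral_farKernel_le μ ha hb.le hσ hab hc
  obtain ⟨C₂, hC₂, hK₂⟩ := exists_setLIntegral_farKernel_le μ hb ha.le hσ (by linarith) hc
  refine ⟨C₁ + C₂, by positivity, fun s S R h hs hS hsS hh => ?_⟩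
  have hsS' : ∀ y ∈ S, 0 ≤ s y ∧ s y ≤ R := fun y hy => ⟨(hsS y hy).1.le, (hsS y hy).2⟩
  rcases S.eq_empty_or_nonempty with rfl | ⟨x₀, hx₀⟩
  · simp
  have hR : 0 ≤ R := (hsS' x₀ hx₀).1.trans (hsS' x₀ hx₀).2
  calc ∫⁻ x in S, ∫⁻ y in S, (h x + h y) * farKernel s a b (finrank ℝ E + σ) c x y ∂μ ∂μ
      ≤ (ENNReal.ofReal (C₁ * R ^ (a + b - σ)) + ENNReal.ofReal (C₂ * R ^ (b + a - σ)))
        * ∫⁻ x in S, h x ∂μ := by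
        refine lintegral_lintegral_add_mul_le hh (measurable_farKernel hs ..) ?_ ?_
        · exact ae_restrict_of_forall_mem hS fun x hx =>
            hK₁ s S R x hS hsS' (hsS x hx).1 (hsS x hx).2
        · refine ae_restrict_of_forall_mem hS fun y hy => ?_
          simp_rw [farKernel_swap s a]
          exact hK₂ s S R y hS hsS' (hsS y hy).1 (hsS y hy).2
    _ = ENNReal.ofReal ((C₁ + C₂) * R ^ (a + b - σ)) * ∫⁻ x in S, h x ∂μ := by
        rw [add_comm b a, ← ENNReal.ofReal_add (by positivity) (by positivity), add_mul]

end HaarMeasure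

theorem statement12_general (n : ℕ)
    (Ω : Set (EuclideanSpace ℝ (Fin n))) (hΩo : IsOpen Ω)
    (σ : ℝ) (hσ : σ ∈ Set.Ioo (0:ℝ) 1) (α β : ℝ) (hα : 0 < α) (hβ : 0 < β) (hαβ : σ < α + β)
    (R₀ : ℝ) (hR₀ : 0 < R₀) (r : ℕ → ℝ) (hr : ∀ k, r k = R₀ / 2 ^ k)
    (d : EuclideanSpace ℝ (Fin n) → ℝ)
    (hd : ∀ x, d x = Metric.infDist x (frontier Ω))
    (Ωl : ℕ → Set (EuclideanSpace ℝ (Fin n)))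
    (hΩl : ∀ k, Ωl k = {x ∈ Ω | r (k + 1) < d x ∧ d x ≤ r k})
    (Ω₀ : Set (EuclideanSpace ℝ (Fin n)))
    (hΩ₀ : Ω₀ = {x ∈ Ω | 0 < d x ∧ d x ≤ R₀ / 2}) :
    ∃ C : ℝ, 0 < C ∧
      ∀ F : EuclideanSpace ℝ (Fin n) → EuclideanSpace ℝ (Fin n), IntegrableOn F Ω →
      (∑' k : ℕ, ∑' j : ℕ,
        if 1 ≤ k ∧ 1 ≤ j ∧ 2 ≤ ((k : ℤ) - (j : ℤ)).natAbs then
          ∫⁻ x in Ωl k, ∫⁻ y in Ωl j,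
            ENNReal.ofReal (d x ^ α * d y ^ β * (‖F x - F y‖ / ‖x - y‖ ^ ((n : ℝ) + σ)))
        else 0)
        ≤ ENNReal.ofReal (C * R₀ ^ (α + β - σ) * ∫ x in Ω₀, ‖F x‖) := by
  obtain ⟨C, hC, hK⟩ := exists_lintegral_lintegral_farKernel_le
    (volume : Measure (EuclideanSpace ℝ (Fin n))) hα hβ hσ.1 hαβ.le two_pos
  have hdLip : LipschitzWith 1 d := funext hd ▸ lipschitz_infDist_pt (frontier Ω)
  have hr_pos : ∀ k, 0 < r k := fun k => hr k ▸ by positivity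
  have hr₂ : ∀ k, 2 * r (k + 1) ≤ r k := fun k => by
    rw [hr, hr, pow_succ, ← div_div, mul_div_cancel₀ _ two_ne_zero]
  have hr₁ : r 1 ≤ R₀ := by rw [hr, pow_one]; linarith
  obtain rfl : Ωl = fun k => {x ∈ Ω | r (k + 1) < d x ∧ d x ≤ r k} := funext hΩl
  obtain rfl : Ω₀ = {x ∈ Ω | 0 < d x ∧ d x ≤ r 1} := by rw [hΩ₀, hr, pow_one]
  set Ω₀ := {x ∈ Ω | 0 < d x ∧ d x ≤ r 1}
  have hΩ₀m : MeasurableSet Ω₀ :=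
    hΩo.measurableSet.inter (hdLip.continuous.measurable measurableSet_Ioc)
  refine ⟨C, hC, fun F hF => ?_⟩
  obtain ⟨G, hGm, hFG⟩ : ∃ G, Measurable G ∧ F =ᵐ[volume.restrict Ω] G :=
    ⟨_, hF.aemeasurable.measurable_mk, hF.aemeasurable.ae_eq_mk⟩
  calc _ ≤ _ := tsum_ite_farLayers_le hΩo.measurableSet hdLip hr_pos hr₂ hGm hFG α β _
    _ ≤ ENNReal.ofReal (C * R₀ ^ (α + β - σ)) * ∫⁻ x in Ω₀, ‖G x‖ₑ := by
        simpa only [finrank_euclideanSpace_fin] using hK d Ω₀ R₀ _ hdLip.continuous.measurable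
          hΩ₀m (fun x hx => ⟨hx.2.1, hx.2.2.trans hr₁⟩) hGm.enorm
    _ = ENNReal.ofReal (C * R₀ ^ (α + β - σ) * ∫ x in Ω₀, ‖F x‖) := by
        rw [ENNReal.ofReal_mul (by positivity : 0 ≤ C * R₀ ^ (α + β - σ)),
          ofReal_integral_norm_eq_lintegral_enorm (hF.mono_set fun x hx => hx.1)]
        refine congrArg _ (lintegral_congr_ae ?_)
        filter_upwards [ae_restrict_of_ae_restrict_of_subset (fun x hx => hx.1) hFG] with x hx
        rw [hx]

/-- With `r_k = 2^{-k} R₀`, layers `Ω_k = {x ∈ Ω : r_{k+1} < d(x) ≤ r_k}` and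
boundary layer `Ω₀ = {x ∈ Ω : 0 < d(x) ≤ R₀/2}`, if `σ ∈ (0,1)`, `α, β > 0` and
`α + β > σ`, there is `C = C(n,σ,α,β) > 0` such that for every `F ∈ L¹(Ω;ℝⁿ)`,
`∑_{k,j ≥ 1, |k-j| ≥ 2} ∫_{Ω_k} ∫_{Ω_j} d^α(x) d^β(y) |F(x) - F(y)| / |x-y|^{n+σ} dx dy
  ≤ C R₀^{α+β-σ} ∫_{Ω₀} |F(x)| dx`. -/
theorem statement12 (n : ℕ) (hn : 2 ≤ n)
    (Ω : Set (EuclideanSpace ℝ (Fin n))) (hΩo : IsOpen Ω) (hΩb : Bornology.IsBounded Ω)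
    (σ : ℝ) (hσ : σ ∈ Set.Ioo (0:ℝ) 1) (α β : ℝ) (hα : 0 < α) (hβ : 0 < β) (hαβ : σ < α + β)
    (R₀ : ℝ) (hR₀ : 0 < R₀) (r : ℕ → ℝ) (hr : ∀ k, r k = R₀ / 2 ^ k)
    (d : EuclideanSpace ℝ (Fin n) → ℝ)
    (hd : ∀ x, d x = Metric.infDist x (frontier Ω))
    (Ωl : ℕ → Set (EuclideanSpace ℝ (Fin n)))
    (hΩl : ∀ k, Ωl k = {x ∈ Ω | r (k + 1) < d x ∧ d x ≤ r k})
    (Ω₀ : Set (EuclideanSpace ℝ (Fin n)))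
    (hΩ₀ : Ω₀ = {x ∈ Ω | 0 < d x ∧ d x ≤ R₀ / 2}) :
    ∃ C : ℝ, 0 < C ∧
      ∀ F : EuclideanSpace ℝ (Fin n) → EuclideanSpace ℝ (Fin n), IntegrableOn F Ω →
      (∑' k : ℕ, ∑' j : ℕ,
        if 1 ≤ k ∧ 1 ≤ j ∧ 2 ≤ ((k : ℤ) - (j : ℤ)).natAbs then
          ∫⁻ x in Ωl k, ∫⁻ y in Ωl j,
            ENNReal.ofReal (d x ^ α * d y ^ β * (‖F x - F y‖ / ‖x - y‖ ^ ((n : ℝ) + σ)))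
        else 0)
        ≤ ENNReal.ofReal (C * R₀ ^ (α + β - σ) * ∫ x in Ω₀, ‖F x‖) :=
  statement12_general n Ω hΩo σ hσ α β hα hβ hαβ R₀ hR₀ r hr d hd Ωl hΩl Ω₀ hΩ₀
end

section
/- Let n ≥ 2, let Ω ⊂ ℝⁿ be an open bounded set, σ ∈ (0,1), α, β ≥ 0, and ρ > 0. Let S = {x ∈ Ω : ρ/4 < d(x) ≤ ρ}, let Q ⊆ S be a finite set with S ⊆ ⋃_{z∈Q} B_ρ(z) and ∑_{z∈Q} 1_{B_{8ρ}(z)}(ξ) ≤ K for all ξ ∈ ℝⁿ, and set U = ⋃_{z∈Q} (B_{8ρ}(z) ∩ Ω). Let F ∈ L¹(Ω; ℝⁿ) and let ν be a finite nonnegative Borel measure on Ω, and assume the local fractional Caccioppoli hypothesis with constant C₁ for F. Then there is C = C(n, σ, K, C₁) > 0 such that ∫_S ∫_S d^α(x) d^β(y) |F(x) − F(y)| / |x − y|^{n+σ} dx dy ≤ C ρ^{α+β−σ} ( ∫_U |F(x)| dx + ρ ν(U) ). -/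
/-!
On `S` the weights `d^α(x) d^β(y)` are at most `ρ^α ρ^β`, so it suffices to bound the unweighted
Gagliardo double integral by `C ρ^{-σ} (∫_U |F| + ρ ν(U))`. Split the pairs `(x, y) ∈ S × S` at
distance `ρ`. A near pair with `x ∈ B_ρ(z)` lies in `B_{2ρ}(z) × B_{2ρ}(z)`, where the Caccioppoli
hypothesis (with `R = 8ρ`) applies; summing over `z ∈ Q` costs the overlap factor `K`. For a far
pair, `|F(x) - F(y)| ≤ |F(x)| + |F(y)|`, and by symmetry of the kernel it remains to bound the tail
`∫_{|y - x| > ρ} |x - y|^{-n-σ} dy = n |B_1| ρ^{-σ} / σ` (polar coordinates).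
-/

open MeasureTheory Metric Set
open scoped ENNReal

section TailIntegral

variable {E : Type*} [NormedAddCommGroup E] [NormedSpace ℝ E] [FiniteDimensional ℝ E]
  [MeasurableSpace E] [BorelSpace E] (μ : Measure E) [μ.IsAddHaarMeasure] {ρ σ : ℝ}

theorem lintegral_indicator_Ioi_rpow_neg_norm [Nontrivial E] (hρ : 0 < ρ) (hσ : 0 < σ) :
    ∫⁻ y, ENNReal.ofReal
        ((Ioi ρ).indicator (fun r => r ^ (-(Module.finrank ℝ E + σ))) ‖y‖) ∂μ
      = ENNReal.ofReal (Module.finrank ℝ E * μ.real (ball 0 1) / σ * ρ ^ (-σ)) := by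
  have hd : 1 ≤ Module.finrank ℝ E := Module.finrank_pos
  have hradial : EqOn (fun r : ℝ => r ^ (Module.finrank ℝ E - 1) •
      (Ioi ρ).indicator (fun r => r ^ (-(Module.finrank ℝ E + σ))) r)
      ((Ioi ρ).indicator fun r => r ^ (-1 - σ)) (Ioi 0) := by
    intro r (hr : 0 < r)
    by_cases hrρ : r ∈ Ioi ρ
    · simp only [indicator_of_mem hrρ, smul_eq_mul]
      rw [← Real.rpow_natCast, ← Real.rpow_add hr, Nat.cast_sub hd]
      ring_nf
    · simp [indicator_of_notMem hrρ]
  have hint : IntegrableOn ((Ioi ρ).indicator fun r : ℝ => r ^ (-1 - σ)) (Ioi 0) :=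
    ((integrableOn_Ioi_rpow_of_lt (by linarith) hρ).integrable_indicator
      measurableSet_Ioi).integrableOn
  rw [← ofReal_integral_eq_lintegral_ofReal
      ((integrable_fun_norm_addHaar μ).2 (hint.congr_fun hradial.symm measurableSet_Ioi))
      (Filter.Eventually.of_forall fun y =>
        indicator_nonneg (fun r (hr : ρ < r) => Real.rpow_nonneg (hρ.trans hr).le _) _),
    integral_fun_norm_addHaar, setIntegral_congr_fun measurableSet_Ioi hradial,
    setIntegral_indicator measurableSet_Ioi, inter_eq_right.2 (Ioi_subset_Ioi hρ.le),
    integral_Ioi_rpow_of_lt (by linarith) hρ]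
  congr 1
  rw [nsmul_eq_mul, smul_eq_mul, show -1 - σ + 1 = -σ by ring]
  field_simp

theorem lintegral_indicator_Ioi_rpow_neg_norm_sub_le (hρ : 0 < ρ) (hσ : 0 < σ) (x : E) :
    ∫⁻ y, ENNReal.ofReal
        ((Ioi ρ).indicator (fun r => r ^ (-(Module.finrank ℝ E + σ))) ‖x - y‖) ∂μ
      ≤ ENNReal.ofReal (Module.finrank ℝ E * μ.real (ball 0 1) / σ * ρ ^ (-σ)) := by
  rcases subsingleton_or_nontrivial E with hE | hE
  · simp [Subsingleton.elim (x - _) 0, hρ.le]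
  · simp_rw [norm_sub_rev x]
    rw [lintegral_sub_right_eq_self
      (fun y => ENNReal.ofReal ((Ioi ρ).indicator _ ‖y‖)) x,
      lintegral_indicator_Ioi_rpow_neg_norm μ hρ hσ]

end TailIntegral

section Lebesgue

variable {α : Type*} [MeasurableSpace α]

theorem lintegral_lintegral_add_mul_le_of_symm {μ : Measure α} [SFinite μ]
    {k : α → α → ℝ≥0∞} (hk : Measurable (Function.uncurry k))
    (hsymm : ∀ x y, k x y = k y x) {a : α → ℝ≥0∞} (ha : AEMeasurable a μ) {T : ℝ≥0∞}
    (hT : ∀ x, ∫⁻ y, k x y ∂μ ≤ T) :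
    ∫⁻ x, ∫⁻ y, (a x + a y) * k x y ∂μ ∂μ ≤ 2 * T * ∫⁻ x, a x ∂μ := by
  have hk_left : ∀ x, Measurable (k x) := fun x => hk.comp measurable_prodMk_left
  have hmain : ∫⁻ x, a x * ∫⁻ y, k x y ∂μ ∂μ ≤ T * ∫⁻ x, a x ∂μ := by
    calc ∫⁻ x, a x * ∫⁻ y, k x y ∂μ ∂μ ≤ ∫⁻ x, a x * T ∂μ := by gcongr with x; exact hT x
      _ = T * ∫⁻ x, a x ∂μ := by rw [lintegral_mul_const'' _ ha, mul_comm]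
  have hswap : ∫⁻ x, ∫⁻ y, a y * k x y ∂μ ∂μ = ∫⁻ y, a y * ∫⁻ x, k y x ∂μ ∂μ := by
    rw [lintegral_lintegral_swap (ha.comp_snd.mul hk.aemeasurable)]
    simp_rw [hsymm _ _]
    exact lintegral_congr fun y => lintegral_const_mul _ (hk_left y)
  calc ∫⁻ x, ∫⁻ y, (a x + a y) * k x y ∂μ ∂μ
      = ∫⁻ x, (a x * ∫⁻ y, k x y ∂μ + ∫⁻ y, a y * k x y ∂μ) ∂μ := by
        refine lintegral_congr fun x => ?_
        simp_rw [add_mul]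
        rw [lintegral_add_left ((hk_left x).const_mul _), lintegral_const_mul _ (hk_left x)]
    _ = ∫⁻ x, a x * ∫⁻ y, k x y ∂μ ∂μ + ∫⁻ x, ∫⁻ y, a y * k x y ∂μ ∂μ :=
        lintegral_add_left' (ha.mul hk.aemeasurable.lintegral_prod_right') _
    _ ≤ T * ∫⁻ x, a x ∂μ + T * ∫⁻ x, a x ∂μ := by rw [hswap]; exact add_le_add hmain hmain
    _ = 2 * T * ∫⁻ x, a x ∂μ := by ring

theorem lintegral_lintegral_le_add_of_le {β : Type*} [MeasurableSpace β] {μ : Measure α}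
    {ν : Measure β} [SFinite ν] {g g₁ g₂ : α → β → ℝ≥0∞}
    (h : ∀ x y, g x y ≤ g₁ x y + g₂ x y) (h₂ : ∀ x, AEMeasurable (g₂ x) ν)
    (h₂' : AEMeasurable (Function.uncurry g₂) (μ.prod ν)) :
    ∫⁻ x, ∫⁻ y, g x y ∂ν ∂μ ≤ ∫⁻ x, ∫⁻ y, g₁ x y ∂ν ∂μ + ∫⁻ x, ∫⁻ y, g₂ x y ∂ν ∂μ :=
  calc ∫⁻ x, ∫⁻ y, g x y ∂ν ∂μ ≤ ∫⁻ x, (∫⁻ y, g₁ x y ∂ν + ∫⁻ y, g₂ x y ∂ν) ∂μ :=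
        lintegral_mono fun x => (lintegral_mono (h x)).trans_eq (lintegral_add_right' _ (h₂ x))
    _ = _ := lintegral_add_right' _ h₂'.lintegral_prod_right

theorem setLIntegral_biUnion_finset_le {ι : Type*} (μ : Measure α) (Q : Finset ι)
    (s : ι → Set α) (f : α → ℝ≥0∞) :
    ∫⁻ x in ⋃ i ∈ Q, s i, f x ∂μ ≤ ∑ i ∈ Q, ∫⁻ x in s i, f x ∂μ := by
  calc ∫⁻ x in ⋃ i ∈ Q, s i, f x ∂μ
      ≤ ∫⁻ x, f x ∂Measure.sum fun i : (Q : Set ι) => μ.restrict (s i) :=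
        lintegral_mono' (Measure.restrict_biUnion_le Q.countable_toSet) le_rfl
    _ = ∑ i ∈ Q, ∫⁻ x in s i, f x ∂μ := by
        rw [lintegral_sum_measure]
        exact Finset.tsum_subtype Q fun i => ∫⁻ x in s i, f x ∂μ

theorem sum_setLIntegral_le_mul_setLIntegral_of_sum_indicator_le {ι : Type*} (μ : Measure α)
    {Q : Finset ι} {A : ι → Set α} {U : Set α} {K : ℕ}
    (hA : ∀ i ∈ Q, MeasurableSet (A i)) (hAU : ∀ i ∈ Q, A i ⊆ U)
    (hK : ∀ x, ∑ i ∈ Q, (A i).indicator (fun _ => (1 : ℝ)) x ≤ K) {f : α → ℝ≥0∞}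
    (hf : AEMeasurable f (μ.restrict U)) :
    ∑ i ∈ Q, ∫⁻ x in A i, f x ∂μ ≤ K * ∫⁻ x in U, f x ∂μ := by
  have hcount : ∀ x, ∑ i ∈ Q, (A i).indicator f x ≤ K * f x := fun x => by
    have hmul : ∑ i ∈ Q, (A i).indicator f x
        = ENNReal.ofReal (∑ i ∈ Q, (A i).indicator (fun _ => (1 : ℝ)) x) * f x := by
      rw [ENNReal.ofReal_sum_of_nonneg fun i _ => indicator_nonneg (fun _ _ => zero_le_one) _,
        Finset.sum_mul]
      exact Finset.sum_congr rfl fun i _ => by by_cases hx : x ∈ A i <;> simp [hx]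
    rw [hmul, ← ENNReal.ofReal_natCast]
    gcongr
    exact hK x
  calc ∑ i ∈ Q, ∫⁻ x in A i, f x ∂μ = ∑ i ∈ Q, ∫⁻ x in U, (A i).indicator f x ∂μ :=
        Finset.sum_congr rfl fun i hi => by
          rw [setLIntegral_indicator (hA i hi), inter_eq_left.2 (hAU i hi)]
    _ = ∫⁻ x in U, ∑ i ∈ Q, (A i).indicator f x ∂μ :=
        (lintegral_finsetSum' Q fun i hi => hf.indicator (hA i hi)).symm
    _ ≤ ∫⁻ x in U, K * f x ∂μ := lintegral_mono hcount
    _ = K * ∫⁻ x in U, f x ∂μ := lintegral_const_mul' _ _ (ENNReal.natCast_ne_top K)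

theorem setLIntegral_setLIntegral_ofReal_mul_le (μ : Measure α) {S : Set α}
    (hS : MeasurableSet S) {w g : α → α → ℝ} {c : ℝ}
    (hw : ∀ x ∈ S, ∀ y ∈ S, w x y ≤ c) (hg : ∀ x y, 0 ≤ g x y) :
    ∫⁻ x in S, ∫⁻ y in S, ENNReal.ofReal (w x y * g x y) ∂μ ∂μ
      ≤ ENNReal.ofReal c * ∫⁻ x in S, ∫⁻ y in S, ENNReal.ofReal (g x y) ∂μ ∂μ := by
  calc ∫⁻ x in S, ∫⁻ y in S, ENNReal.ofReal (w x y * g x y) ∂μ ∂μ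
      ≤ ∫⁻ x in S, ∫⁻ y in S, ENNReal.ofReal c * ENNReal.ofReal (g x y) ∂μ ∂μ :=
        setLIntegral_mono' hS fun x hx => setLIntegral_mono' hS fun y hy => by
          rw [← ENNReal.ofReal_mul' (hg x y)]
          exact ENNReal.ofReal_le_ofReal (mul_le_mul_of_nonneg_right (hw x hx y hy) (hg x y))
    _ = _ := by
        simp_rw [lintegral_const_mul' _ _ ENNReal.ofReal_ne_top]

end Lebesgue

section Caccioppoli

variable {X E : Type*} [PseudoMetricSpace X] [MeasurableSpace X] [NormedAddCommGroup E]

/-- The local fractional Caccioppoli hypothesis with constant `C₁`, for a general energy density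
`G` (in the theorem, `G x y = |F x - F y| / |x - y|^{n+σ}`). -/
def FractionalCaccioppoli (μ ν : Measure X) (Ω : Set X) (G : X → X → ℝ≥0∞) (F : X → E)
    (σ C₁ : ℝ) : Prop :=
  ∀ (z : X) (R : ℝ), 0 < R →
    ∫⁻ x in ball z (R / 2) ∩ Ω, ∫⁻ y in ball z (R / 2) ∩ Ω, G x y ∂μ ∂μ
      ≤ ENNReal.ofReal (C₁ * R ^ (-σ) *
          ((∫ x in ball z R ∩ Ω, ‖F x‖ ∂μ) + R * (ν (ball z R ∩ Ω)).toReal))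

theorem setLIntegral_setLIntegral_ball_inter_le {μ ν : Measure X} [IsFiniteMeasure ν]
    {Ω : Set X} {G : X → X → ℝ≥0∞} {F : X → E} {ρ σ C₁ : ℝ}
    (hcacc : FractionalCaccioppoli μ ν Ω G F σ C₁) (hρ : 0 < ρ) (hσ : 0 ≤ σ)
    (hF : IntegrableOn F Ω μ) (z : X) :
    ∫⁻ x in ball z (2 * ρ) ∩ Ω, ∫⁻ y in ball z (2 * ρ) ∩ Ω, G x y ∂μ ∂μ
      ≤ ENNReal.ofReal (|C₁| * ρ ^ (-σ)) * (∫⁻ x in ball z (8 * ρ) ∩ Ω, ‖F x‖ₑ ∂μ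
          + ENNReal.ofReal (8 * ρ) * ν (ball z (8 * ρ) ∩ Ω)) := by
  have hsub : ball z (2 * ρ) ∩ Ω ⊆ ball z (8 * ρ / 2) ∩ Ω :=
    inter_subset_inter_left _ (ball_subset_ball (by linarith))
  have hconst : C₁ * (8 * ρ) ^ (-σ) ≤ |C₁| * ρ ^ (-σ) :=
    mul_le_mul (le_abs_self C₁) (Real.rpow_le_rpow_of_nonpos hρ (by linarith) (by linarith))
      (by positivity) (abs_nonneg C₁)
  calc ∫⁻ x in ball z (2 * ρ) ∩ Ω, ∫⁻ y in ball z (2 * ρ) ∩ Ω, G x y ∂μ ∂μ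
      ≤ ∫⁻ x in ball z (8 * ρ / 2) ∩ Ω, ∫⁻ y in ball z (8 * ρ / 2) ∩ Ω, G x y ∂μ ∂μ :=
        (lintegral_mono_set hsub).trans (lintegral_mono fun x => lintegral_mono_set hsub)
    _ ≤ _ := hcacc z (8 * ρ) (by positivity)
    _ ≤ ENNReal.ofReal (|C₁| * ρ ^ (-σ) * ((∫ x in ball z (8 * ρ) ∩ Ω, ‖F x‖ ∂μ)
          + 8 * ρ * (ν (ball z (8 * ρ) ∩ Ω)).toReal)) := by
        gcongr
    _ = _ := by
        rw [ENNReal.ofReal_mul (by positivity), ENNReal.ofReal_add (by positivity) (by positivity),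
          ofReal_integral_norm_eq_lintegral_enorm (hF.mono_set inter_subset_right),
          ENNReal.ofReal_mul (p := 8 * ρ) (by positivity),
          ENNReal.ofReal_toReal (measure_ne_top ν _)]

theorem setLIntegral_setLIntegral_closedBall_inter_le_sum [OpensMeasurableSpace X]
    (μ : Measure X) (G : X → X → ℝ≥0∞)
    {S Ω : Set X} {Q : Finset X} {ρ : ℝ} (hS : MeasurableSet S) (hSΩ : S ⊆ Ω)
    (hcov : S ⊆ ⋃ z ∈ Q, ball z ρ) :
    ∫⁻ x in S, ∫⁻ y in closedBall x ρ ∩ S, G x y ∂μ ∂μ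
      ≤ ∑ z ∈ Q, ∫⁻ x in ball z (2 * ρ) ∩ Ω, ∫⁻ y in ball z (2 * ρ) ∩ Ω, G x y ∂μ ∂μ := by
  have hnear : ∀ z, ∀ x ∈ S ∩ ball z ρ, closedBall x ρ ∩ S ⊆ ball z (2 * ρ) ∩ Ω := by
    intro z x hx y hy
    have hyx : dist y x ≤ ρ := hy.1
    have hxz : dist x z < ρ := hx.2
    exact ⟨mem_ball.2 (by linarith [dist_triangle y x z]), hSΩ hy.2⟩
  have hcenter : ∀ z, S ∩ ball z ρ ⊆ ball z (2 * ρ) ∩ Ω := fun z x hx =>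
    ⟨ball_subset_ball (by linarith [pos_of_mem_ball hx.2]) hx.2, hSΩ hx.1⟩
  calc ∫⁻ x in S, ∫⁻ y in closedBall x ρ ∩ S, G x y ∂μ ∂μ
      ≤ ∫⁻ x in ⋃ z ∈ Q, S ∩ ball z ρ, ∫⁻ y in closedBall x ρ ∩ S, G x y ∂μ ∂μ :=
        lintegral_mono_set fun x hx => by
          obtain ⟨z, hz, hxz⟩ := mem_iUnion₂.1 (hcov hx)
          exact mem_iUnion₂.2 ⟨z, hz, hx, hxz⟩
    _ ≤ ∑ z ∈ Q, ∫⁻ x in S ∩ ball z ρ, ∫⁻ y in closedBall x ρ ∩ S, G x y ∂μ ∂μ :=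
        setLIntegral_biUnion_finset_le μ Q _ _
    _ ≤ _ := Finset.sum_le_sum fun z _ =>
        (setLIntegral_mono' (hS.inter measurableSet_ball) fun x hx =>
          lintegral_mono_set (hnear z x hx)).trans (lintegral_mono_set (hcenter z))

theorem setLIntegral_setLIntegral_closedBall_inter_le_of_caccioppoli [OpensMeasurableSpace X]
    {μ ν : Measure X} [IsFiniteMeasure ν] {G : X → X → ℝ≥0∞} {F : X → E}
    {Ω S U : Set X} {Q : Finset X} {ρ σ C₁ : ℝ} {K : ℕ}
    (hcacc : FractionalCaccioppoli μ ν Ω G F σ C₁) (hΩ : MeasurableSet Ω)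
    (hS : MeasurableSet S) (hSΩ : S ⊆ Ω) (hρ : 0 < ρ) (hσ : 0 ≤ σ)
    (hcov : S ⊆ ⋃ z ∈ Q, ball z ρ)
    (hK : ∀ x, ∑ z ∈ Q, (ball z (8 * ρ)).indicator (fun _ => (1 : ℝ)) x ≤ K)
    (hU : U = ⋃ z ∈ Q, ball z (8 * ρ) ∩ Ω) (hF : IntegrableOn F Ω μ) :
    ∫⁻ x in S, ∫⁻ y in closedBall x ρ ∩ S, G x y ∂μ ∂μ
      ≤ ENNReal.ofReal (8 * K * |C₁| * ρ ^ (-σ))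
          * (∫⁻ x in U, ‖F x‖ₑ ∂μ + ENNReal.ofReal ρ * ν U) := by
  set c := |C₁| * ρ ^ (-σ)
  have hA : ∀ z ∈ Q, MeasurableSet (ball z (8 * ρ) ∩ Ω) := fun z _ =>
    measurableSet_ball.inter hΩ
  have hAU : ∀ z ∈ Q, ball z (8 * ρ) ∩ Ω ⊆ U := fun z hz x hx => hU ▸ mem_iUnion₂.2 ⟨z, hz, hx⟩
  have hK' : ∀ x, ∑ z ∈ Q, (ball z (8 * ρ) ∩ Ω).indicator (fun _ => (1 : ℝ)) x ≤ K := fun x =>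
    (Finset.sum_le_sum fun z _ => indicator_le_indicator_of_subset inter_subset_left
      (fun _ => zero_le_one) x).trans (hK x)
  have hsumF := sum_setLIntegral_le_mul_setLIntegral_of_sum_indicator_le μ hA hAU hK'
    ((hF.mono_set (hU ▸ iUnion₂_subset fun z _ => inter_subset_right)).aestronglyMeasurable.enorm)
  have hsumν := sum_setLIntegral_le_mul_setLIntegral_of_sum_indicator_le ν hA hAU hK'
    aemeasurable_const (f := fun _ => 1)
  simp only [setLIntegral_one] at hsumν
  calc ∫⁻ x in S, ∫⁻ y in closedBall x ρ ∩ S, G x y ∂μ ∂μ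
      ≤ ∑ z ∈ Q, ∫⁻ x in ball z (2 * ρ) ∩ Ω, ∫⁻ y in ball z (2 * ρ) ∩ Ω, G x y ∂μ ∂μ :=
        setLIntegral_setLIntegral_closedBall_inter_le_sum μ G hS hSΩ hcov
    _ ≤ ∑ z ∈ Q, ENNReal.ofReal c * (∫⁻ x in ball z (8 * ρ) ∩ Ω, ‖F x‖ₑ ∂μ
          + ENNReal.ofReal (8 * ρ) * ν (ball z (8 * ρ) ∩ Ω)) :=
        Finset.sum_le_sum fun z _ => setLIntegral_setLIntegral_ball_inter_le hcacc hρ hσ hF z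
    _ = ENNReal.ofReal c * (∑ z ∈ Q, ∫⁻ x in ball z (8 * ρ) ∩ Ω, ‖F x‖ₑ ∂μ
          + 8 * ENNReal.ofReal ρ * ∑ z ∈ Q, ν (ball z (8 * ρ) ∩ Ω)) := by
        rw [← Finset.mul_sum, Finset.sum_add_distrib, ← Finset.mul_sum,
          ENNReal.ofReal_mul (p := 8) (by norm_num), ENNReal.ofReal_ofNat]
    _ ≤ ENNReal.ofReal c * (8 * K * ∫⁻ x in U, ‖F x‖ₑ ∂μ + 8 * ENNReal.ofReal ρ * (K * ν U)) := by
        have h8 : (K : ℝ≥0∞) ≤ 8 * K := le_mul_of_one_le_left zero_le (by norm_num)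
        gcongr
        exact hsumF.trans (by gcongr)
    _ = _ := by
        rw [show 8 * K * |C₁| * ρ ^ (-σ) = 8 * K * c by ring,
          ENNReal.ofReal_mul (p := 8 * K) (by positivity),
          ENNReal.ofReal_mul (p := 8) (by norm_num), ENNReal.ofReal_ofNat, ENNReal.ofReal_natCast]
        ring

end Caccioppoli

theorem ofReal_norm_sub_div_rpow_le {E E' : Type*} [SeminormedAddCommGroup E]
    [NormedAddCommGroup E'] (F : E → E') (ρ s : ℝ) (x y : E) :
    ENNReal.ofReal (‖F x - F y‖ / ‖x - y‖ ^ s)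
      ≤ (closedBall x ρ).indicator (fun y => ENNReal.ofReal (‖F x - F y‖ / ‖x - y‖ ^ s)) y
        + (‖F x‖ₑ + ‖F y‖ₑ) * ENNReal.ofReal ((Ioi ρ).indicator (fun r => r ^ (-s)) ‖x - y‖) := by
  by_cases hy : y ∈ closedBall x ρ
  · rw [indicator_of_mem hy]
    exact le_self_add
  · have hfar : ‖x - y‖ ∈ Ioi ρ := by
      rw [mem_closedBall, dist_comm, dist_eq_norm, not_le] at hy
      exact hy
    rw [indicator_of_notMem hy, zero_add, indicator_of_mem hfar, div_eq_mul_inv,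
      ← Real.rpow_neg (norm_nonneg _), ENNReal.ofReal_mul (norm_nonneg _), ofReal_norm]
    gcongr
    exact enorm_sub_le

section Gagliardo

variable {E E' : Type*} [NormedAddCommGroup E] [NormedSpace ℝ E] [FiniteDimensional ℝ E]
  [MeasurableSpace E] [BorelSpace E] [NormedAddCommGroup E']

theorem setLIntegral_setLIntegral_add_mul_indicator_rpow_le (μ : Measure E)
    [μ.IsAddHaarMeasure] {S : Set E} {a : E → ℝ≥0∞} (ha : AEMeasurable a (μ.restrict S))
    {ρ σ : ℝ} (hρ : 0 < ρ) (hσ : 0 < σ) :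
    ∫⁻ x in S, ∫⁻ y in S, (a x + a y) * ENNReal.ofReal
        ((Ioi ρ).indicator (fun r => r ^ (-(Module.finrank ℝ E + σ))) ‖x - y‖) ∂μ ∂μ
      ≤ 2 * ENNReal.ofReal (Module.finrank ℝ E * μ.real (ball 0 1) / σ * ρ ^ (-σ))
          * ∫⁻ x in S, a x ∂μ := by
  refine lintegral_lintegral_add_mul_le_of_symm ?_ (fun x y => by rw [norm_sub_rev]) ha
    fun x => (setLIntegral_le_lintegral _ _).trans
      (lintegral_indicator_Ioi_rpow_neg_norm_sub_le μ hρ hσ x)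
  exact (((measurable_id.pow_const _).indicator measurableSet_Ioi).comp
    (measurable_fst.sub measurable_snd).norm).ennreal_ofReal

theorem setLIntegral_setLIntegral_gagliardo_le {μ ν : Measure E} [μ.IsAddHaarMeasure]
    [IsFiniteMeasure ν] {F : E → E'} {Ω S U : Set E} {Q : Finset E} {ρ σ s C₁ : ℝ} {K : ℕ}
    (hs : s = Module.finrank ℝ E + σ)
    (hcacc : FractionalCaccioppoli μ ν Ω
      (fun x y => ENNReal.ofReal (‖F x - F y‖ / ‖x - y‖ ^ s)) F σ C₁)
    (hΩ : MeasurableSet Ω) (hS : MeasurableSet S) (hSΩ : S ⊆ Ω) (hρ : 0 < ρ) (hσ : 0 < σ)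
    (hcov : S ⊆ ⋃ z ∈ Q, ball z ρ)
    (hK : ∀ x, ∑ z ∈ Q, (ball z (8 * ρ)).indicator (fun _ => (1 : ℝ)) x ≤ K)
    (hU : U = ⋃ z ∈ Q, ball z (8 * ρ) ∩ Ω) (hF : IntegrableOn F Ω μ) :
    ∫⁻ x in S, ∫⁻ y in S, ENNReal.ofReal (‖F x - F y‖ / ‖x - y‖ ^ s) ∂μ ∂μ
      ≤ ENNReal.ofReal ((8 * K * |C₁| + 2 * (Module.finrank ℝ E * μ.real (ball 0 1) / σ))
          * ρ ^ (-σ) * ((∫ x in U, ‖F x‖ ∂μ) + ρ * (ν U).toReal)) := by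
  subst hs
  set T := Module.finrank ℝ E * μ.real (ball 0 1) / σ
  set g : E → E → ℝ≥0∞ := fun x y =>
    ENNReal.ofReal (‖F x - F y‖ / ‖x - y‖ ^ (Module.finrank ℝ E + σ))
  set k : E → E → ℝ≥0∞ := fun x y => ENNReal.ofReal
    ((Ioi ρ).indicator (fun r => r ^ (-(Module.finrank ℝ E + σ))) ‖x - y‖)
  set M := ∫⁻ x in U, ‖F x‖ₑ ∂μ + ENNReal.ofReal ρ * ν U with hM
  have hUΩ : U ⊆ Ω := hU ▸ iUnion₂_subset fun z _ => inter_subset_right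
  have hSU : S ⊆ U := fun x hx => by
    obtain ⟨z, hz, hxz⟩ := mem_iUnion₂.1 (hcov hx)
    exact hU ▸ mem_iUnion₂.2 ⟨z, hz, ball_subset_ball (by linarith) hxz, hSΩ hx⟩
  have ha : AEMeasurable (fun x => ‖F x‖ₑ) (μ.restrict S) :=
    (hF.mono_set hSΩ).aestronglyMeasurable.enorm
  have hk : Measurable (Function.uncurry k) :=
    (((measurable_id.pow_const _).indicator measurableSet_Ioi).comp
      (measurable_fst.sub measurable_snd).norm).ennreal_ofReal
  have hnear : ∫⁻ x in S, ∫⁻ y in S, (closedBall x ρ).indicator (g x) y ∂μ ∂μ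
      ≤ ENNReal.ofReal (8 * K * |C₁| * ρ ^ (-σ)) * M := by
    simp_rw [setLIntegral_indicator measurableSet_closedBall]
    exact setLIntegral_setLIntegral_closedBall_inter_le_of_caccioppoli hcacc hΩ hS hSΩ hρ
      hσ.le hcov hK hU hF
  have hfar : ∫⁻ x in S, ∫⁻ y in S, (‖F x‖ₑ + ‖F y‖ₑ) * k x y ∂μ ∂μ
      ≤ ENNReal.ofReal (2 * T * ρ ^ (-σ)) * M := by
    refine (setLIntegral_setLIntegral_add_mul_indicator_rpow_le μ ha hρ hσ).trans ?_
    rw [mul_assoc 2 T, ENNReal.ofReal_mul (p := 2) (by norm_num), ENNReal.ofReal_ofNat]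
    gcongr
    exact (lintegral_mono_set hSU).trans le_self_add
  calc ∫⁻ x in S, ∫⁻ y in S, g x y ∂μ ∂μ
      ≤ ∫⁻ x in S, ∫⁻ y in S, (closedBall x ρ).indicator (g x) y ∂μ ∂μ
          + ∫⁻ x in S, ∫⁻ y in S, (‖F x‖ₑ + ‖F y‖ₑ) * k x y ∂μ ∂μ :=
        lintegral_lintegral_le_add_of_le (ofReal_norm_sub_div_rpow_le F ρ _)
          (fun x => (ha.const_add _).mul (hk.comp measurable_prodMk_left).aemeasurable)
          ((ha.comp_fst.add ha.comp_snd).mul hk.aemeasurable)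
    _ ≤ ENNReal.ofReal (8 * K * |C₁| * ρ ^ (-σ)) * M + ENNReal.ofReal (2 * T * ρ ^ (-σ)) * M :=
        add_le_add hnear hfar
    _ = _ := by
        rw [← add_mul, ← ENNReal.ofReal_add (by positivity) (by positivity), hM,
          ← ofReal_integral_norm_eq_lintegral_enorm (hF.mono_set hUΩ),
          ← ENNReal.ofReal_toReal (measure_ne_top ν U), ← ENNReal.ofReal_mul hρ.le,
          ← ENNReal.ofReal_add (by positivity) (by positivity),
          ← ENNReal.ofReal_mul (by positivity), ENNReal.toReal_ofReal ENNReal.toReal_nonneg]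
        ring_nf

end Gagliardo

theorem statement13_general (n : ℕ)
    (Ω : Set (EuclideanSpace ℝ (Fin n))) (hΩo : IsOpen Ω)
    (σ : ℝ) (hσ : σ ∈ Set.Ioo (0:ℝ) 1) (α β : ℝ) (hα : 0 ≤ α) (hβ : 0 ≤ β)
    (ρ : ℝ) (hρ : 0 < ρ)
    (d : EuclideanSpace ℝ (Fin n) → ℝ)
    (hd : ∀ x, d x = Metric.infDist x (frontier Ω))
    (S : Set (EuclideanSpace ℝ (Fin n)))
    (hS : S = {x ∈ Ω | ρ / 4 < d x ∧ d x ≤ ρ})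
    (Q : Finset (EuclideanSpace ℝ (Fin n)))
    (hScov : S ⊆ ⋃ z ∈ Q, Metric.ball z ρ)
    (K : ℕ)
    (hover : ∀ ξ : EuclideanSpace ℝ (Fin n),
      ∑ z ∈ Q, Set.indicator (Metric.ball z (8 * ρ)) (fun _ => (1 : ℝ)) ξ ≤ K)
    (U : Set (EuclideanSpace ℝ (Fin n)))
    (hU : U = ⋃ z ∈ Q, (Metric.ball z (8 * ρ) ∩ Ω))
    (F : EuclideanSpace ℝ (Fin n) → EuclideanSpace ℝ (Fin n)) (hF : IntegrableOn F Ω)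
    (ν : Measure (EuclideanSpace ℝ (Fin n))) [IsFiniteMeasure ν]
    (C₁ : ℝ)
    (hcacc : ∀ (z : EuclideanSpace ℝ (Fin n)) (R : ℝ), 0 < R →
      ∫⁻ x in Metric.ball z (R / 2) ∩ Ω, ∫⁻ y in Metric.ball z (R / 2) ∩ Ω,
          ENNReal.ofReal (‖F x - F y‖ / ‖x - y‖ ^ ((n : ℝ) + σ))
        ≤ ENNReal.ofReal (C₁ * R ^ (-σ) *
            ((∫ x in Metric.ball z R ∩ Ω, ‖F x‖) + R * (ν (Metric.ball z R ∩ Ω)).toReal))) :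
    ∃ C : ℝ, 0 < C ∧
      ∫⁻ x in S, ∫⁻ y in S,
          ENNReal.ofReal (d x ^ α * d y ^ β * (‖F x - F y‖ / ‖x - y‖ ^ ((n : ℝ) + σ)))
        ≤ ENNReal.ofReal (C * ρ ^ (α + β - σ) *
            ((∫ x in U, ‖F x‖) + ρ * (ν U).toReal)) := by
  have hdS : ∀ x ∈ S, 0 ≤ d x ∧ d x ≤ ρ := fun x hx =>
    ⟨hd x ▸ infDist_nonneg, (hS ▸ hx : x ∈ {x ∈ Ω | ρ / 4 < d x ∧ d x ≤ ρ}).2.2⟩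
  have hSm : MeasurableSet S := hS ▸ hΩo.measurableSet.inter
    ((funext hd ▸ (continuous_infDist_pt _).measurable : Measurable d) measurableSet_Ioc)
  set C := 8 * K * |C₁| + 2 * (Module.finrank ℝ (EuclideanSpace ℝ (Fin n))
    * volume.real (ball (0 : EuclideanSpace ℝ (Fin n)) 1) / σ)
  have hC : 0 ≤ C := by have := hσ.1; positivity
  refine ⟨max C 1, by positivity, ?_⟩
  calc _ ≤ ENNReal.ofReal (ρ ^ α * ρ ^ β) * ∫⁻ x in S, ∫⁻ y in S,
          ENNReal.ofReal (‖F x - F y‖ / ‖x - y‖ ^ ((n : ℝ) + σ)) :=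
        setLIntegral_setLIntegral_ofReal_mul_le volume hSm (w := fun x y => d x ^ α * d y ^ β)
          (fun x hx y hy => mul_le_mul (Real.rpow_le_rpow (hdS x hx).1 (hdS x hx).2 hα)
            (Real.rpow_le_rpow (hdS y hy).1 (hdS y hy).2 hβ)
            (Real.rpow_nonneg (hdS y hy).1 β) (by positivity))
          fun x y => by positivity
    _ ≤ ENNReal.ofReal (ρ ^ α * ρ ^ β)
          * ENNReal.ofReal (C * ρ ^ (-σ) * ((∫ x in U, ‖F x‖) + ρ * (ν U).toReal)) := by
        gcongr
        exact setLIntegral_setLIntegral_gagliardo_le (by simp) hcacc hΩo.measurableSet hSm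
          (hS ▸ fun x hx => hx.1) hρ hσ.1 hScov hover hU hF
    _ ≤ _ := by
        rw [← ENNReal.ofReal_mul (by positivity)]
        refine ENNReal.ofReal_le_ofReal ?_
        rw [sub_eq_add_neg, Real.rpow_add hρ, Real.rpow_add hρ]
        calc _ = C * (ρ ^ α * ρ ^ β * ρ ^ (-σ)) * ((∫ x in U, ‖F x‖) + ρ * (ν U).toReal) := by
              ring
          _ ≤ _ := by gcongr; exact le_max_left C 1

/-- one boundary layer estimate. Let `S = {x ∈ Ω : ρ/4 < d(x) ≤ ρ}`, let
`Q ⊆ S` be finite with `S ⊆ ⋃_{z∈Q} B_ρ(z)` and `∑_{z∈Q} 1_{B_{8ρ}(z)} ≤ K`, and set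
`U = ⋃_{z∈Q} (B_{8ρ}(z) ∩ Ω)`. If `F ∈ L¹(Ω;ℝⁿ)`, `ν` is a finite nonnegative Borel
measure, and the local fractional Caccioppoli hypothesis with constant `C₁` holds for `F`,
then there is `C = C(n,σ,K,C₁) > 0` with
`∫_S ∫_S d^α(x) d^β(y) |F(x) - F(y)| / |x-y|^{n+σ} dx dy ≤ C ρ^{α+β-σ} (∫_U |F| + ρ ν(U))`. -/
theorem statement13 (n : ℕ) (hn : 2 ≤ n)
    (Ω : Set (EuclideanSpace ℝ (Fin n))) (hΩo : IsOpen Ω) (hΩb : Bornology.IsBounded Ω)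
    (σ : ℝ) (hσ : σ ∈ Set.Ioo (0:ℝ) 1) (α β : ℝ) (hα : 0 ≤ α) (hβ : 0 ≤ β)
    (ρ : ℝ) (hρ : 0 < ρ)
    (d : EuclideanSpace ℝ (Fin n) → ℝ)
    (hd : ∀ x, d x = Metric.infDist x (frontier Ω))
    (S : Set (EuclideanSpace ℝ (Fin n)))
    (hS : S = {x ∈ Ω | ρ / 4 < d x ∧ d x ≤ ρ})
    (Q : Finset (EuclideanSpace ℝ (Fin n))) (hQS : ↑Q ⊆ S)
    (hScov : S ⊆ ⋃ z ∈ Q, Metric.ball z ρ)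
    (K : ℕ)
    (hover : ∀ ξ : EuclideanSpace ℝ (Fin n),
      ∑ z ∈ Q, Set.indicator (Metric.ball z (8 * ρ)) (fun _ => (1 : ℝ)) ξ ≤ K)
    (U : Set (EuclideanSpace ℝ (Fin n)))
    (hU : U = ⋃ z ∈ Q, (Metric.ball z (8 * ρ) ∩ Ω))
    (F : EuclideanSpace ℝ (Fin n) → EuclideanSpace ℝ (Fin n)) (hF : IntegrableOn F Ω)
    (ν : Measure (EuclideanSpace ℝ (Fin n))) [IsFiniteMeasure ν]
    (C₁ : ℝ)
    (hcacc : ∀ (z : EuclideanSpace ℝ (Fin n)) (R : ℝ), 0 < R →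
      ∫⁻ x in Metric.ball z (R / 2) ∩ Ω, ∫⁻ y in Metric.ball z (R / 2) ∩ Ω,
          ENNReal.ofReal (‖F x - F y‖ / ‖x - y‖ ^ ((n : ℝ) + σ))
        ≤ ENNReal.ofReal (C₁ * R ^ (-σ) *
            ((∫ x in Metric.ball z R ∩ Ω, ‖F x‖) + R * (ν (Metric.ball z R ∩ Ω)).toReal))) :
    ∃ C : ℝ, 0 < C ∧
      ∫⁻ x in S, ∫⁻ y in S,
          ENNReal.ofReal (d x ^ α * d y ^ β * (‖F x - F y‖ / ‖x - y‖ ^ ((n : ℝ) + σ)))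
        ≤ ENNReal.ofReal (C * ρ ^ (α + β - σ) *
            ((∫ x in U, ‖F x‖) + ρ * (ν U).toReal)) :=
  statement13_general n Ω hΩo σ hσ α β hα hβ ρ hρ d hd S hS Q hScov K hover U hU F hF ν C₁ hcacc
end
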